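/- arXiv:2604.07178 — 8 statements merged into one kernel-verified Lean document; each statement's English description precedes it below -/
import Mathlib

section
/- For every integer k ≥ 1 and n = 2^k, there exists a depth-k 1D-QAC circuit C on exactly n qubits (no ancilla qubits) such that C|0^n⟩ = (|0^n⟩ + |1^n⟩)/√2, the n-qubit cat state. -/
/-- A layer of arbitrary single-qubit unitaries on qubits indexed by `ι`,
written as a matrix in the computational basis (indexed by `ι → Bool`):
the entrywise tensor product of single-qubit unitaries. -/
def IsSingleQubitLayer {ι : Type*} [Fintype ι] [DecidableEq ι]
    (L : Matrix (ι → Bool) (ι → Bool) ℂ) : Prop :=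
  ∃ u : ι → Matrix Bool Bool ℂ,
    (∀ i, u i ∈ Matrix.unitaryGroup Bool ℂ) ∧
    ∀ x y, L x y = ∏ i, u i (x i) (y i)

/-- A layer of CZ gates acting on pairwise disjoint supports, each support
required to satisfy the predicate `P`.  The CZ gate on a set `T` maps a basis
state `|x⟩` to `−|x⟩` if `x` is all ones on `T` and fixes it otherwise; a layer
is the corresponding diagonal matrix. -/
def IsCZLayer {ι : Type*} [Fintype ι] [DecidableEq ι] (P : Finset ι → Prop)
    (M : Matrix (ι → Bool) (ι → Bool) ℂ) : Prop :=
  ∃ 𝒯 : Finset (Finset ι),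
    (∀ T ∈ 𝒯, P T) ∧
    ((𝒯 : Set (Finset ι)).Pairwise fun T T' => Disjoint T T') ∧
    ∀ x y, M x y =
      if x = y then ∏ T ∈ 𝒯, (if ∀ i ∈ T, x i = true then (-1 : ℂ) else 1)
      else 0

/-- A depth-`d` QAC circuit whose CZ-gate supports are constrained by `P`:
`C = L_d · M_d ⋯ L_1 · M_1 · L_0` with `L_t` layers of single-qubit unitaries
and `M_t` layers of CZ gates on pairwise disjoint supports satisfying `P`. -/
def IsQACOn {ι : Type*} [Fintype ι] [DecidableEq ι] (P : Finset ι → Prop) :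
    ℕ → Matrix (ι → Bool) (ι → Bool) ℂ → Prop
  | 0, C => IsSingleQubitLayer C
  | d + 1, C => ∃ L M C', IsSingleQubitLayer L ∧ IsCZLayer P M ∧
      IsQACOn P d C' ∧ C = L * M * C'

/-- A contiguous interval of qubits on the line `Fin m`. -/
def IsInterval1D {m : ℕ} (T : Finset (Fin m)) : Prop :=
  ∀ a b c : Fin m, a ∈ T → c ∈ T → a ≤ b → b ≤ c → b ∈ T

/-- A depth-`d` 1D-QAC circuit on `m` qubits arranged on a line: every CZ gate
acts on a contiguous interval of qubits. -/
def Is1DQAC {m : ℕ} (d : ℕ) (C : Matrix (Fin m → Bool) (Fin m → Bool) ℂ) :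
    Prop :=
  IsQACOn IsInterval1D d C

/-!
Induction on `k`, doubling the line at each step. Run a circuit for `Cat_n` on the even qubits
`2i` of a line of `2n` qubits while every odd qubit holds `|1⟩`: a CZ gate on an interval `T`
becomes a CZ gate on the interval `{2i, 2i + 1 | i ∈ T}`, which acts in the same way because the
added qubits are `1`. Preceded by `X` on the odd qubits, this lifted circuit prepares `Cat_n` on
the evens and `|1⟩` on the odds. One more layer (`HX` on the odd qubits, absorbed into the last
single-qubit layer, then CZ on each pair `{2i, 2i + 1}` and `H` on the odd qubits) copies every
even bit onto its odd neighbour, which gives `Cat_{2n}` at depth one larger. The base case is a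
Hadamard gate on a single qubit.
-/

open Finset Matrix

noncomputable section

def hadamardGate : Matrix Bool Bool ℂ :=
  of fun a b => if a && b then -(1 / (Real.sqrt 2 : ℂ)) else 1 / (Real.sqrt 2 : ℂ)

def pauliXGate : Matrix Bool Bool ℂ :=
  of fun a b => if a = b then 0 else 1

lemma inv_sqrt_two_mul_self : 1 / (Real.sqrt 2 : ℂ) * (1 / (Real.sqrt 2 : ℂ)) = 1 / 2 := by
  rw [div_mul_div_comm, one_mul, ← Complex.ofReal_mul, Real.mul_self_sqrt zero_le_two]
  norm_num

lemma hadamardGate_mul_self : hadamardGate * hadamardGate = 1 := by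
  ext a b
  have h := inv_sqrt_two_mul_self
  cases a <;> cases b <;> simp [hadamardGate, Matrix.mul_apply] <;> linear_combination 2 * h

lemma conjTranspose_hadamardGate : hadamardGateᴴ = hadamardGate := by
  ext a b
  cases a <;> cases b <;> simp [hadamardGate, Complex.conj_ofReal]

lemma pauliXGate_mul_self : pauliXGate * pauliXGate = 1 := by
  ext a b
  cases a <;> cases b <;> simp [pauliXGate, Matrix.mul_apply]

lemma conjTranspose_pauliXGate : pauliXGateᴴ = pauliXGate := by
  ext a b
  cases a <;> cases b <;> simp [pauliXGate]

lemma hadamardGate_mem_unitaryGroup : hadamardGate ∈ unitaryGroup Bool ℂ := by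
  rw [mem_unitaryGroup_iff, star_eq_conjTranspose, conjTranspose_hadamardGate,
    hadamardGate_mul_self]

lemma pauliXGate_mem_unitaryGroup : pauliXGate ∈ unitaryGroup Bool ℂ := by
  rw [mem_unitaryGroup_iff, star_eq_conjTranspose, conjTranspose_pauliXGate, pauliXGate_mul_self]

section Layers

variable {ι : Type*} [Fintype ι]

def layer (u : ι → Matrix Bool Bool ℂ) : Matrix (ι → Bool) (ι → Bool) ℂ :=
  of fun x y => ∏ i, u i (x i) (y i)

lemma layer_one : layer (1 : ι → Matrix Bool Bool ℂ) = 1 := by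
  ext x y
  simp only [layer, of_apply, Pi.one_apply, one_apply, Fintype.prod_boole, funext_iff]

variable [DecidableEq ι]

lemma isSingleQubitLayer_layer {u : ι → Matrix Bool Bool ℂ}
    (hu : ∀ i, u i ∈ unitaryGroup Bool ℂ) : IsSingleQubitLayer (layer u) :=
  ⟨u, hu, fun _ _ => rfl⟩

lemma IsSingleQubitLayer.exists_eq_layer {L : Matrix (ι → Bool) (ι → Bool) ℂ}
    (h : IsSingleQubitLayer L) :
    ∃ u : ι → Matrix Bool Bool ℂ, (∀ i, u i ∈ unitaryGroup Bool ℂ) ∧ L = layer u := by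
  obtain ⟨u, hu, h⟩ := h
  exact ⟨u, hu, by ext x y; exact h x y⟩

lemma layer_mul_layer (u w : ι → Matrix Bool Bool ℂ) : layer u * layer w = layer (u * w) := by
  ext x y
  simp only [layer, mul_apply, of_apply, Pi.mul_apply, ← prod_mul_distrib, Fintype.prod_sum]

lemma layer_mulVec_single (u : ι → Matrix Bool Bool ℂ) (a : ι → Bool) :
    layer u *ᵥ Pi.single a 1 = fun z => ∏ i, u i (z i) (a i) := by
  ext z
  simp [layer]

lemma IsSingleQubitLayer.mul {L L' : Matrix (ι → Bool) (ι → Bool) ℂ}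
    (h : IsSingleQubitLayer L) (h' : IsSingleQubitLayer L') : IsSingleQubitLayer (L * L') := by
  obtain ⟨u, hu, rfl⟩ := h.exists_eq_layer
  obtain ⟨w, hw, rfl⟩ := h'.exists_eq_layer
  rw [layer_mul_layer]
  exact isSingleQubitLayer_layer fun i => mul_mem (hu i) (hw i)

variable {P : Finset ι → Prop} {d : ℕ} {C L : Matrix (ι → Bool) (ι → Bool) ℂ}

lemma IsQACOn.mul_singleQubitLayer (hC : IsQACOn P d C) (hL : IsSingleQubitLayer L) :
    IsQACOn P d (C * L) := by
  induction d generalizing C with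
  | zero => exact IsSingleQubitLayer.mul hC hL
  | succ d ih =>
    obtain ⟨L', M, C', hL', hM, hC', rfl⟩ := hC
    exact ⟨L', M, C' * L, hL', hM, ih hC', by simp only [mul_assoc]⟩

lemma IsQACOn.singleQubitLayer_mul (hC : IsQACOn P d C) (hL : IsSingleQubitLayer L) :
    IsQACOn P d (L * C) := by
  cases d with
  | zero => exact IsSingleQubitLayer.mul hL hC
  | succ d =>
    obtain ⟨L', M, C', hL', hM, hC', rfl⟩ := hC
    exact ⟨L * L', M, C', hL.mul hL', hM, hC', by simp only [mul_assoc]⟩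

def czPhase (𝒯 : Finset (Finset ι)) (x : ι → Bool) : ℂ :=
  ∏ T ∈ 𝒯, if ∀ i ∈ T, x i = true then -1 else 1

lemma isCZLayer_diagonal_czPhase {𝒯 : Finset (Finset ι)} (hP : ∀ T ∈ 𝒯, P T)
    (hdisj : (𝒯 : Set (Finset ι)).Pairwise Disjoint) : IsCZLayer P (diagonal (czPhase 𝒯)) :=
  ⟨𝒯, hP, hdisj, fun _ _ => diagonal_apply _ _ _⟩

lemma IsCZLayer.exists_eq_diagonal {M : Matrix (ι → Bool) (ι → Bool) ℂ} (h : IsCZLayer P M) :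
    ∃ 𝒯 : Finset (Finset ι), (∀ T ∈ 𝒯, P T) ∧ (𝒯 : Set (Finset ι)).Pairwise Disjoint ∧
      M = diagonal (czPhase 𝒯) := by
  obtain ⟨𝒯, hP, hdisj, h⟩ := h
  exact ⟨𝒯, hP, hdisj, by ext x y; rw [h, diagonal_apply]; rfl⟩

end Layers

section DoubledLine

variable {n : ℕ}

-- Qubit `j = 2i + b` of the doubled line is `finProdFinEquiv (i, b)`, with `i = j.divNat` and
-- `b = j.modNat`; the qubits of the original line sit at the even positions.
def liftBits (x : Fin n → Bool) (j : Fin (n * 2)) : Bool :=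
  if j.modNat = 0 then x j.divNat else true

def liftGates (u : Fin n → Matrix Bool Bool ℂ) (w : Matrix Bool Bool ℂ) (j : Fin (n * 2)) :
    Matrix Bool Bool ℂ :=
  if j.modNat = 0 then u j.divNat else w

def liftSupport (T : Finset (Fin n)) : Finset (Fin (n * 2)) :=
  {j | j.divNat ∈ T}

def liftEmbed (n : ℕ) : Matrix (Fin (n * 2) → Bool) (Fin n → Bool) ℂ :=
  of fun y x => if y = liftBits x then 1 else 0

@[simp] lemma divNat_finProdFinEquiv (i : Fin n) (b : Fin 2) :
    (finProdFinEquiv (i, b)).divNat = i :=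
  congrArg Prod.fst (finProdFinEquiv.symm_apply_apply (i, b))

@[simp] lemma modNat_finProdFinEquiv (i : Fin n) (b : Fin 2) :
    (finProdFinEquiv (i, b)).modNat = b :=
  congrArg Prod.snd (finProdFinEquiv.symm_apply_apply (i, b))

lemma prod_fin_mul_two {M : Type*} [CommMonoid M] (f : Fin (n * 2) → M) :
    ∏ j, f j = ∏ i, f (finProdFinEquiv (i, 0)) * f (finProdFinEquiv (i, 1)) := by
  rw [← finProdFinEquiv.prod_comp, Fintype.prod_prod_type]
  simp [Fin.prod_univ_two]

@[simp] lemma liftBits_even (x : Fin n → Bool) (i : Fin n) :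
    liftBits x (finProdFinEquiv (i, 0)) = x i := by
  simp [liftBits]

@[simp] lemma liftBits_odd (x : Fin n → Bool) (i : Fin n) :
    liftBits x (finProdFinEquiv (i, 1)) = true := by
  simp [liftBits]

@[simp] lemma liftGates_even (u : Fin n → Matrix Bool Bool ℂ) (w : Matrix Bool Bool ℂ)
    (i : Fin n) :
    liftGates u w (finProdFinEquiv (i, 0)) = u i := by
  simp [liftGates]

@[simp] lemma liftGates_odd (u : Fin n → Matrix Bool Bool ℂ) (w : Matrix Bool Bool ℂ)
    (i : Fin n) :
    liftGates u w (finProdFinEquiv (i, 1)) = w := by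
  simp [liftGates]

lemma isSingleQubitLayer_layer_liftGates {u : Fin n → Matrix Bool Bool ℂ}
    {w : Matrix Bool Bool ℂ} (hu : ∀ i, u i ∈ unitaryGroup Bool ℂ)
    (hw : w ∈ unitaryGroup Bool ℂ) : IsSingleQubitLayer (layer (liftGates u w)) := by
  refine isSingleQubitLayer_layer fun j => ?_
  unfold liftGates
  split_ifs
  exacts [hu _, hw]

lemma liftBits_injective : Function.Injective (liftBits (n := n)) := by
  intro x x' h
  funext i
  simpa using congrFun h (finProdFinEquiv (i, 0))

lemma mem_range_liftBits {y : Fin (n * 2) → Bool} :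
    y ∈ Set.range liftBits ↔ ∀ i, y (finProdFinEquiv (i, 1)) = true := by
  refine ⟨by rintro ⟨x, rfl⟩ i; simp, fun h => ⟨fun i => y (finProdFinEquiv (i, 0)), ?_⟩⟩
  funext j
  obtain ⟨⟨i, b⟩, rfl⟩ := finProdFinEquiv.surjective j
  fin_cases b <;> simp [h]

lemma mul_liftEmbed_eq_liftEmbed_mul {A : Matrix (Fin n → Bool) (Fin n → Bool) ℂ}
    {B : Matrix (Fin (n * 2) → Bool) (Fin (n * 2) → Bool) ℂ}
    (h_range : ∀ x y, B (liftBits y) (liftBits x) = A y x)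
    (h_off : ∀ x, ∀ y ∉ Set.range liftBits, B y (liftBits x) = 0) :
    B * liftEmbed n = liftEmbed n * A := by
  refine Matrix.ext fun y x => ?_
  simp only [mul_apply, liftEmbed, of_apply, mul_ite, mul_one, mul_zero, ite_mul, one_mul,
    zero_mul, sum_ite_eq', mem_univ, if_true]
  by_cases hy : y ∈ Set.range liftBits
  · obtain ⟨y, rfl⟩ := hy
    simp [liftBits_injective.eq_iff, h_range]
  · rw [h_off x y hy]
    exact (sum_eq_zero fun x' _ => if_neg fun h => hy ⟨x', h.symm⟩).symm

lemma layer_liftGates_mul_liftEmbed (u : Fin n → Matrix Bool Bool ℂ) :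
    layer (liftGates u 1) * liftEmbed n = liftEmbed n * layer u := by
  refine mul_liftEmbed_eq_liftEmbed_mul (fun x y => ?_) (fun x y hy => ?_)
  · simp [layer, prod_fin_mul_two, one_apply]
  · obtain ⟨i, hi⟩ := not_forall.mp (mem_range_liftBits.not.mp hy)
    refine prod_eq_zero (mem_univ (finProdFinEquiv (i, 1))) ?_
    simp [hi]

lemma mem_liftSupport {T : Finset (Fin n)} {j : Fin (n * 2)} :
    j ∈ liftSupport T ↔ j.divNat ∈ T := by
  simp [liftSupport]

lemma liftSupport_injective : Function.Injective (liftSupport (n := n)) := by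
  intro T T' h
  ext i
  simpa [mem_liftSupport] using congrArg (finProdFinEquiv (i, 0) ∈ ·) h

lemma disjoint_liftSupport {T T' : Finset (Fin n)} (h : Disjoint T T') :
    Disjoint (liftSupport T) (liftSupport T') := by
  simp only [disjoint_left, mem_liftSupport] at h ⊢
  exact fun _ hT => h hT

lemma isInterval1D_liftSupport {T : Finset (Fin n)} (h : IsInterval1D T) :
    IsInterval1D (liftSupport T) := by
  intro a b c ha hc hab hbc
  rw [mem_liftSupport] at ha hc ⊢
  refine h _ _ _ ha hc ?_ ?_ <;> rw [Fin.le_def] at * <;> simp only [Fin.coe_divNat] <;>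
    exact Nat.div_le_div_right ‹_›

lemma forall_mem_liftSupport_liftBits (T : Finset (Fin n)) (x : Fin n → Bool) :
    (∀ j ∈ liftSupport T, liftBits x j = true) ↔ ∀ i ∈ T, x i = true := by
  refine ⟨fun h i hi => by simpa using h (finProdFinEquiv (i, 0)) (by simpa [mem_liftSupport]),
    fun h j hj => ?_⟩
  obtain ⟨⟨i, b⟩, rfl⟩ := finProdFinEquiv.surjective j
  rw [mem_liftSupport, divNat_finProdFinEquiv] at hj
  fin_cases b <;> simp [h i hj]

lemma czPhase_image_liftSupport (𝒯 : Finset (Finset (Fin n))) (x : Fin n → Bool) :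
    czPhase (𝒯.image liftSupport) (liftBits x) = czPhase 𝒯 x := by
  rw [czPhase, czPhase, prod_image fun T _ T' _ h => liftSupport_injective h]
  refine prod_congr rfl fun T _ => ?_
  congr 1
  exact propext (forall_mem_liftSupport_liftBits T x)

lemma diagonal_czPhase_image_liftSupport_mul_liftEmbed (𝒯 : Finset (Finset (Fin n))) :
    diagonal (czPhase (𝒯.image liftSupport)) * liftEmbed n =
      liftEmbed n * diagonal (czPhase 𝒯) := by
  refine mul_liftEmbed_eq_liftEmbed_mul (fun x y => ?_) (fun x y hy => ?_)
  · simp [diagonal_apply, liftBits_injective.eq_iff, czPhase_image_liftSupport]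
  · exact diagonal_apply_ne _ fun h => hy ⟨x, h.symm⟩

lemma isCZLayer_image_liftSupport {𝒯 : Finset (Finset (Fin n))}
    (hP : ∀ T ∈ 𝒯, IsInterval1D T)
    (hdisj : (𝒯 : Set (Finset (Fin n))).Pairwise Disjoint) :
    IsCZLayer IsInterval1D (diagonal (czPhase (𝒯.image liftSupport))) := by
  refine isCZLayer_diagonal_czPhase ?_ ?_
  · simpa using fun T hT => isInterval1D_liftSupport (hP T hT)
  · rw [coe_image]
    exact (hdisj.mono' fun T T' h => disjoint_liftSupport h).image

lemma IsQACOn.exists_mul_liftEmbed {d : ℕ} {C : Matrix (Fin n → Bool) (Fin n → Bool) ℂ}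
    (hC : IsQACOn IsInterval1D d C) :
    ∃ D : Matrix (Fin (n * 2) → Bool) (Fin (n * 2) → Bool) ℂ,
      IsQACOn IsInterval1D d D ∧ D * liftEmbed n = liftEmbed n * C := by
  induction d generalizing C with
  | zero =>
    obtain ⟨u, hu, rfl⟩ := IsSingleQubitLayer.exists_eq_layer hC
    exact ⟨layer (liftGates u 1), isSingleQubitLayer_layer_liftGates hu (one_mem _),
      layer_liftGates_mul_liftEmbed u⟩
  | succ d ih =>
    obtain ⟨L, M, C', hL, hM, hC', rfl⟩ := hC
    obtain ⟨D', hD', hD'C'⟩ := ih hC'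
    obtain ⟨u, hu, rfl⟩ := hL.exists_eq_layer
    obtain ⟨𝒯, hP, hdisj, rfl⟩ := hM.exists_eq_diagonal
    set M' := diagonal (czPhase (𝒯.image liftSupport))
    refine ⟨layer (liftGates u 1) * M' * D', ⟨_, _, D',
      isSingleQubitLayer_layer_liftGates hu (one_mem _),
      isCZLayer_image_liftSupport hP hdisj, hD', rfl⟩, ?_⟩
    calc layer (liftGates u 1) * M' * D' * liftEmbed n
        = layer (liftGates u 1) * (M' * liftEmbed n) * C' := by
          simp only [Matrix.mul_assoc, hD'C']
      _ = layer (liftGates u 1) * liftEmbed n * diagonal (czPhase 𝒯) * C' := by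
          rw [diagonal_czPhase_image_liftSupport_mul_liftEmbed]
          simp only [Matrix.mul_assoc]
      _ = liftEmbed n * (layer u * diagonal (czPhase 𝒯) * C') := by
          rw [layer_liftGates_mul_liftEmbed]
          simp only [Matrix.mul_assoc]

end DoubledLine

section FanOut

variable {n : ℕ}

def pairSupports (n : ℕ) : Finset (Finset (Fin (n * 2))) :=
  (univ.image fun i : Fin n => ({i} : Finset (Fin n))).image liftSupport

lemma isCZLayer_pairSupports :
    IsCZLayer IsInterval1D (diagonal (czPhase (pairSupports n))) := by
  refine isCZLayer_image_liftSupport ?_ ?_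
  · simp only [mem_image, mem_univ, true_and, forall_exists_index, forall_apply_eq_imp_iff]
    intro i a b c ha hc hab hbc
    rw [mem_singleton] at ha hc ⊢
    exact le_antisymm (hc ▸ hbc) (ha ▸ hab)
  · rw [coe_image]
    exact Set.Pairwise.image fun i _ j _ hij => disjoint_singleton.mpr hij

lemma czPhase_pairSupports (y : Fin (n * 2) → Bool) :
    czPhase (pairSupports n) y = ∏ i, if y (finProdFinEquiv (i, 0)) = true ∧
      y (finProdFinEquiv (i, 1)) = true then -1 else 1 := by
  rw [czPhase, pairSupports, image_image,
    prod_image (liftSupport_injective.comp singleton_injective).injOn]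
  refine prod_congr rfl fun i _ => ?_
  congr 1
  refine propext ⟨fun h => ⟨h _ (by simp [mem_liftSupport]), h _ (by simp [mem_liftSupport])⟩,
    fun h j hj => ?_⟩
  obtain ⟨⟨i', b⟩, rfl⟩ := finProdFinEquiv.surjective j
  rw [Function.comp_apply, mem_liftSupport, divNat_finProdFinEquiv, mem_singleton] at hj
  subst hj
  fin_cases b
  exacts [h.1, h.2]

def fanOut (n : ℕ) : Matrix (Fin (n * 2) → Bool) (Fin (n * 2) → Bool) ℂ :=
  layer (liftGates 1 hadamardGate) * diagonal (czPhase (pairSupports n)) *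
    layer (liftGates 1 (hadamardGate * pauliXGate))

-- `HX|1⟩ = |+⟩`, and the CZ phase controlled by the partner bit `a = v` turns it into `H|v⟩`.
lemma cz_mul_hadamardGate_mul_pauliXGate_apply (a b v : Bool) :
    (if a = true ∧ b = true then -1 else 1) *
        ((1 : Matrix Bool Bool ℂ) a v * (hadamardGate * pauliXGate) b true) =
      (1 : Matrix Bool Bool ℂ) a v * hadamardGate b v := by
  cases a <;> cases b <;> cases v <;> simp [hadamardGate, pauliXGate, mul_apply]

lemma layer_liftGates_hadamardGate_mul_self :
    layer (liftGates 1 hadamardGate) * layer (liftGates 1 hadamardGate) =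
      (1 : Matrix (Fin (n * 2) → Bool) (Fin (n * 2) → Bool) ℂ) := by
  rw [layer_mul_layer, ← layer_one]
  congr 1
  funext j
  simp only [Pi.mul_apply, liftGates]
  split_ifs <;> simp [hadamardGate_mul_self]

lemma fanOut_mulVec_single_liftBits (v : Bool) :
    fanOut n *ᵥ Pi.single (liftBits fun _ => v) 1 = Pi.single (fun _ => v) 1 := by
  have hphase : diagonal (czPhase (pairSupports n)) *ᵥ
      (layer (liftGates 1 (hadamardGate * pauliXGate)) *ᵥ Pi.single (liftBits fun _ => v) 1) =
      layer (liftGates 1 hadamardGate) *ᵥ Pi.single (fun _ => v) 1 := by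
    funext y
    simp only [mulVec_diagonal, layer_mulVec_single, czPhase_pairSupports]
    rw [prod_fin_mul_two, prod_fin_mul_two, ← prod_mul_distrib]
    simp only [liftGates_even, liftGates_odd, liftBits_even, liftBits_odd, Pi.one_apply]
    exact prod_congr rfl fun i _ => cz_mul_hadamardGate_mul_pauliXGate_apply _ _ v
  rw [fanOut, ← mulVec_mulVec, ← mulVec_mulVec, hphase, mulVec_mulVec,
    layer_liftGates_hadamardGate_mul_self, one_mulVec]

end FanOut

def catVec (ι : Type*) [Fintype ι] [DecidableEq ι] : (ι → Bool) → ℂ :=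
  (1 / (Real.sqrt 2 : ℂ)) • ∑ v : Bool, Pi.single (fun _ => v) 1

lemma catVec_eq_ite {ι : Type*} [Fintype ι] [DecidableEq ι] [Nonempty ι] :
    catVec ι = fun z =>
      if z = (fun _ => false) then 1 / (Real.sqrt 2 : ℂ)
      else if z = (fun _ => true) then 1 / (Real.sqrt 2 : ℂ) else 0 := by
  have hne : (fun _ => false : ι → Bool) ≠ fun _ => true :=
    fun h => Bool.false_ne_true (congrFun h (Classical.arbitrary ι))
  funext z
  simp only [catVec, Fintype.sum_bool, Pi.smul_apply, Pi.add_apply, Pi.single_apply, smul_eq_mul]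
  split_ifs <;> simp_all

variable {n : ℕ}

lemma liftEmbed_mulVec_single (x : Fin n → Bool) :
    liftEmbed n *ᵥ Pi.single x 1 = Pi.single (liftBits x) 1 := by
  funext y
  simp [liftEmbed, Pi.single_apply]

lemma layer_liftGates_pauliXGate_mulVec_single :
    layer (liftGates 1 pauliXGate) *ᵥ Pi.single (fun _ => false) 1 =
      liftEmbed n *ᵥ Pi.single (fun _ => false) 1 := by
  rw [liftEmbed_mulVec_single, ← one_mulVec (Pi.single (liftBits _) 1), ← layer_one,
    layer_mulVec_single, layer_mulVec_single]
  funext z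
  rw [prod_fin_mul_two, prod_fin_mul_two]
  refine prod_congr rfl fun i _ => ?_
  cases z (finProdFinEquiv (i, 1)) <;> simp [pauliXGate, one_apply]

lemma fanOut_mulVec_liftEmbed_catVec :
    fanOut n *ᵥ (liftEmbed n *ᵥ catVec (Fin n)) = catVec (Fin (n * 2)) := by
  simp only [catVec, mulVec_smul, mulVec_sum, liftEmbed_mulVec_single,
    fanOut_mulVec_single_liftBits]

lemma Is1DQAC.exists_double_catVec {d : ℕ} {C : Matrix (Fin n → Bool) (Fin n → Bool) ℂ}
    (hC : Is1DQAC d C) (hcat : C *ᵥ Pi.single (fun _ => false) 1 = catVec (Fin n)) :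
    ∃ C₂ : Matrix (Fin (n * 2) → Bool) (Fin (n * 2) → Bool) ℂ,
      Is1DQAC (d + 1) C₂ ∧ C₂ *ᵥ Pi.single (fun _ => false) 1 = catVec (Fin (n * 2)) := by
  obtain ⟨D, hD, hDE⟩ := IsQACOn.exists_mul_liftEmbed hC
  refine ⟨fanOut n * D * layer (liftGates 1 pauliXGate), ?_, ?_⟩
  · refine ⟨layer (liftGates 1 hadamardGate), diagonal (czPhase (pairSupports n)),
      layer (liftGates 1 (hadamardGate * pauliXGate)) * D * layer (liftGates 1 pauliXGate),
      isSingleQubitLayer_layer_liftGates (fun _ => one_mem _) hadamardGate_mem_unitaryGroup,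
      isCZLayer_pairSupports, (hD.singleQubitLayer_mul ?_).mul_singleQubitLayer ?_,
      by simp only [fanOut, Matrix.mul_assoc]⟩
    exacts [isSingleQubitLayer_layer_liftGates (fun _ => one_mem _)
        (mul_mem hadamardGate_mem_unitaryGroup pauliXGate_mem_unitaryGroup),
      isSingleQubitLayer_layer_liftGates (fun _ => one_mem _) pauliXGate_mem_unitaryGroup]
  · rw [← mulVec_mulVec, layer_liftGates_pauliXGate_mulVec_single, ← mulVec_mulVec,
      mulVec_mulVec _ D, hDE, ← mulVec_mulVec, hcat, fanOut_mulVec_liftEmbed_catVec]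

lemma exists_is1DQAC_catVec_fin_one :
    ∃ C : Matrix (Fin 1 → Bool) (Fin 1 → Bool) ℂ,
      Is1DQAC 0 C ∧ C *ᵥ Pi.single (fun _ => false) 1 = catVec (Fin 1) := by
  refine ⟨layer fun _ => hadamardGate,
    isSingleQubitLayer_layer fun _ => hadamardGate_mem_unitaryGroup, ?_⟩
  rw [layer_mulVec_single, catVec_eq_ite]
  funext z
  have hz : z = fun _ => z 0 := funext fun i => congrArg z (Subsingleton.elim i 0)
  rw [hz]
  cases z 0 <;> simp [hadamardGate, funext_iff]

lemma exists_is1DQAC_catVec (k : ℕ) :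
    ∃ C : Matrix (Fin (2 ^ k) → Bool) (Fin (2 ^ k) → Bool) ℂ,
      Is1DQAC k C ∧ C *ᵥ Pi.single (fun _ => false) 1 = catVec (Fin (2 ^ k)) := by
  induction k with
  | zero => exact exists_is1DQAC_catVec_fin_one
  | succ k ih =>
    obtain ⟨C, hC, hcat⟩ := ih
    exact hC.exists_double_catVec hcat

end

theorem stmt3_general (k : ℕ) :
    ∃ C : Matrix (Fin (2 ^ k) → Bool) (Fin (2 ^ k) → Bool) ℂ,
      Is1DQAC k C ∧
      C.mulVec (fun z => if z = (fun _ => false) then 1 else 0) =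
        fun z =>
          if z = (fun _ => false) then (1 : ℂ) / (Real.sqrt 2 : ℂ)
          else if z = (fun _ => true) then (1 : ℂ) / (Real.sqrt 2 : ℂ)
          else 0 := by
  obtain ⟨C, hC, hcat⟩ := exists_is1DQAC_catVec k
  refine ⟨C, hC, ?_⟩
  rw [← catVec_eq_ite, ← hcat]
  congr 1
  funext z
  exact (Pi.single_apply _ _ _).symm

/-- **Cat-state synthesis by a logarithmic-depth 1D-QAC circuit.**
For every `k ≥ 1` and `n = 2^k`, there is a depth-`k` 1D-QAC circuit on exactly
`n` qubits (no ancillas) mapping `|0^n⟩` to `(|0^n⟩ + |1^n⟩)/√2`. -/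
theorem stmt3 (k : ℕ) (hk : 1 ≤ k) :
    ∃ C : Matrix (Fin (2 ^ k) → Bool) (Fin (2 ^ k) → Bool) ℂ,
      Is1DQAC k C ∧
      C.mulVec (fun z => if z = (fun _ => false) then 1 else 0) =
        fun z =>
          if z = (fun _ => false) then (1 : ℂ) / (Real.sqrt 2 : ℂ)
          else if z = (fun _ => true) then (1 : ℂ) / (Real.sqrt 2 : ℂ)
          else 0 :=
  stmt3_general k
end

section
/- Let A, B, C be nonempty finite types. Let G be a unitary matrix on ℂ^{A×B}, let H be a unitary matrix on ℂ^{B×C}, and let φ ∈ ℂ^{B×C} be a unit vector. Define the unitary U = (G ⊗ I_C)·(I_A ⊗ H) on ℂ^{A×B×C}, and for each x ∈ A let ψ_x = U(e_x ⊗ φ), where e_x is the standard basis vector of ℂ^A indexed by x, and let ρ^x be the partial trace over C of ψ_x ψ_x†, i.e., the matrix on ℂ^{A×B} with entries ρ^x((a,b),(a',b')) = Σ_{c∈C} ψ_x(a,b,c)·conj(ψ_x(a',b',c)). Then Σ_{x∈A} ρ^x ⪯ I, i.e., the matrix I_{A×B} − Σ_{x∈A} ρ^x is positive semidefinite. -/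
/-!
Write `χ = Hφ` as a `B × C` matrix `M`. Then `ψ_x(a, b, c)` is the entry `((a, b), (x, c))` of
`G (I_A ⊗ M)`, so `Σ_x ρ^x = G (I_A ⊗ M Mᴴ) Gᴴ`. By Cauchy–Schwarz, a matrix of Frobenius
norm at most one satisfies `M Mᴴ ≤ I`, and here the Frobenius norm of `M` is `‖Hφ‖ = ‖φ‖ = 1`.
Hence `I - Σ_x ρ^x = G (I_A ⊗ (I_B - M Mᴴ)) Gᴴ` is positive semidefinite.
-/

open scoped ComplexOrder Kronecker
open Matrix

namespace Matrix

section RCLike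

variable {𝕜 m n : Type*} [RCLike 𝕜] [Fintype m] [Fintype n]

lemma dotProduct_star_self_eq_sum_norm_sq (v : n → 𝕜) :
    star v ⬝ᵥ v = ((∑ i, ‖v i‖ ^ 2 : ℝ) : 𝕜) := by
  simp [dotProduct, RCLike.conj_mul]

lemma sum_norm_sq_mulVec_of_mem_unitaryGroup [DecidableEq n] {U : Matrix n n 𝕜}
    (hU : U ∈ unitaryGroup n 𝕜) (v : n → 𝕜) :
    ∑ i, ‖(U *ᵥ v) i‖ ^ 2 = ∑ i, ‖v i‖ ^ 2 := by
  have h : star (U *ᵥ v) ⬝ᵥ (U *ᵥ v) = star v ⬝ᵥ v := by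
    rw [star_mulVec, dotProduct_mulVec, vecMul_vecMul, ← star_eq_conjTranspose,
      (mem_unitaryGroup_iff').1 hU, vecMul_one]
  simpa only [dotProduct_star_self_eq_sum_norm_sq, RCLike.ofReal_inj] using h

lemma sum_norm_sq_conjTranspose_mulVec_le (M : Matrix m n 𝕜) (v : m → 𝕜) :
    ∑ j, ‖(Mᴴ *ᵥ v) j‖ ^ 2 ≤ (∑ i, ∑ j, ‖M i j‖ ^ 2) * ∑ i, ‖v i‖ ^ 2 := by
  have hcol : ∀ j, ‖(Mᴴ *ᵥ v) j‖ ^ 2 ≤ (∑ i, ‖M i j‖ ^ 2) * ∑ i, ‖v i‖ ^ 2 := fun j =>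
    calc ‖(Mᴴ *ᵥ v) j‖ ^ 2 ≤ (∑ i, ‖M i j‖ * ‖v i‖) ^ 2 := by
          gcongr
          refine (norm_sum_le _ _).trans_eq ?_
          simp [conjTranspose_apply, norm_mul]
      _ ≤ (∑ i, ‖M i j‖ ^ 2) * ∑ i, ‖v i‖ ^ 2 := Finset.sum_mul_sq_le_sq_mul_sq _ _ _
  calc ∑ j, ‖(Mᴴ *ᵥ v) j‖ ^ 2 ≤ ∑ j, (∑ i, ‖M i j‖ ^ 2) * ∑ i, ‖v i‖ ^ 2 :=
        Finset.sum_le_sum fun j _ => hcol j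
    _ = (∑ i, ∑ j, ‖M i j‖ ^ 2) * ∑ i, ‖v i‖ ^ 2 := by
        rw [← Finset.sum_mul, Finset.sum_comm]

lemma posSemidef_one_sub_mul_conjTranspose [DecidableEq m] {M : Matrix m n 𝕜}
    (hM : ∑ i, ∑ j, ‖M i j‖ ^ 2 ≤ 1) : (1 - M * Mᴴ).PosSemidef := by
  refine .of_dotProduct_mulVec_nonneg (isHermitian_one.sub (isHermitian_mul_conjTranspose_self M))
    fun v => ?_
  have hform : star v ⬝ᵥ ((1 - M * Mᴴ) *ᵥ v) = star v ⬝ᵥ v - star (Mᴴ *ᵥ v) ⬝ᵥ (Mᴴ *ᵥ v) := by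
    rw [sub_mulVec, one_mulVec, dotProduct_sub, ← mulVec_mulVec, dotProduct_mulVec,
      star_mulVec, conjTranspose_conjTranspose]
  have hv := sum_norm_sq_conjTranspose_mulVec_le M v
  rw [hform, dotProduct_star_self_eq_sum_norm_sq, dotProduct_star_self_eq_sum_norm_sq,
    ← RCLike.ofReal_sub, RCLike.ofReal_nonneg, sub_nonneg]
  nlinarith [Finset.sum_nonneg fun i (_ : i ∈ Finset.univ) => sq_nonneg ‖v i‖]

lemma PosSemidef.one_sub_mul_mul_conjTranspose_of_mem_unitaryGroup [DecidableEq n]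
    {S : Matrix n n 𝕜} (hS : (1 - S).PosSemidef) {G : Matrix n n 𝕜} (hG : G ∈ unitaryGroup n 𝕜) :
    (1 - G * S * Gᴴ).PosSemidef := by
  have h : 1 - G * S * Gᴴ = G * (1 - S) * Gᴴ := by
    rw [mul_sub, sub_mul, mul_one, ← star_eq_conjTranspose, (mem_unitaryGroup_iff).1 hG]
  exact h ▸ hS.mul_mul_conjTranspose_same G

lemma PosSemidef.one_sub_one_kronecker [DecidableEq m] [DecidableEq n] {S : Matrix n n 𝕜}
    (hS : (1 - S).PosSemidef) : (1 - (1 : Matrix m m 𝕜) ⊗ₖ S).PosSemidef := by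
  have h : 1 - (1 : Matrix m m 𝕜) ⊗ₖ S = 1 ⊗ₖ (1 - S) := by
    ext ⟨i, k⟩ ⟨j, l⟩
    by_cases hij : i = j <;> by_cases hkl : k = l <;> simp [hij, hkl]
  exact h ▸ PosSemidef.one.kronecker hS

end RCLike

lemma sum_of_sum_mul_star_eq_mul_conjTranspose {α ι m n : Type*} [Fintype ι] [Fintype n]
    [NonUnitalNonAssocSemiring α] [Star α] (Ψ : Matrix m (ι × n) α) :
    ∑ x, Matrix.of (fun r s => ∑ c, Ψ r (x, c) * star (Ψ s (x, c))) = Ψ * Ψᴴ := by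
  ext r s
  simp [mul_apply, Fintype.sum_prod_type, Matrix.sum_apply]

end Matrix

section Circuit

variable {α A B C : Type*} [Fintype A] [Fintype B] [Fintype C] [DecidableEq A] [DecidableEq C]
  [CommSemiring α]

def separableCircuit (G : Matrix (A × B) (A × B) α) (H : Matrix (B × C) (B × C) α) :
    Matrix (A × B × C) (A × B × C) α :=
  (Matrix.of fun p q => G (p.1, p.2.1) (q.1, q.2.1) * (if p.2.2 = q.2.2 then 1 else 0)) *
    (Matrix.of fun p q => (if p.1 = q.1 then 1 else 0) * H p.2 q.2)

lemma separableCircuit_mulVec_apply (G : Matrix (A × B) (A × B) α)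
    (H : Matrix (B × C) (B × C) α) (φ : B × C → α) (x a : A) (b : B) (c : C) :
    (separableCircuit G H *ᵥ fun p => if p.1 = x then φ p.2 else 0) (a, b, c) =
      (G * ((1 : Matrix A A α) ⊗ₖ Matrix.of fun b c => (H *ᵥ φ) (b, c))) (a, b) (x, c) := by
  simp only [separableCircuit, mulVec, dotProduct, mul_apply, of_apply, kroneckerMap_apply,
    one_apply, Fintype.sum_prod_type, mul_ite, mul_one, mul_zero, ite_mul, one_mul, zero_mul,
    Finset.sum_ite_irrel, Finset.sum_ite_eq, Finset.sum_ite_eq', Finset.mem_univ, ↓reduceIte,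
    Finset.sum_const_zero, Finset.sum_mul, Finset.mul_sum, mul_assoc]
  exact Finset.sum_comm_cycle

end Circuit

theorem stmt5_general {A B C : Type*} [Fintype A] [Fintype B] [Fintype C]
    [DecidableEq A] [DecidableEq B] [DecidableEq C]
    (G : Matrix (A × B) (A × B) ℂ) (hG : G ∈ Matrix.unitaryGroup (A × B) ℂ)
    (H : Matrix (B × C) (B × C) ℂ) (hH : H ∈ Matrix.unitaryGroup (B × C) ℂ)
    (φ : B × C → ℂ) (hφ : ∑ bc, ‖φ bc‖ ^ 2 = 1) :
    let U : Matrix (A × B × C) (A × B × C) ℂ :=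
      (Matrix.of fun p q =>
          G (p.1, p.2.1) (q.1, q.2.1) * (if p.2.2 = q.2.2 then 1 else 0)) *
      (Matrix.of fun p q => (if p.1 = q.1 then 1 else 0) * H p.2 q.2)
    let ψ : A → (A × B × C → ℂ) := fun x =>
      U.mulVec fun p => if p.1 = x then φ p.2 else 0
    let ρ : A → Matrix (A × B) (A × B) ℂ := fun x =>
      Matrix.of fun r s => ∑ c, ψ x (r.1, r.2, c) * star (ψ x (s.1, s.2, c))
    ((1 : Matrix (A × B) (A × B) ℂ) - ∑ x, ρ x).PosSemidef := by
  intro U ψ ρ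
  set M : Matrix B C ℂ := Matrix.of fun b c => (H *ᵥ φ) (b, c)
  have hψ (x a b c) : ψ x (a, b, c) = (G * ((1 : Matrix A A ℂ) ⊗ₖ M)) (a, b) (x, c) :=
    separableCircuit_mulVec_apply G H φ x a b c
  have hρ : ∑ x, ρ x = G * ((1 : Matrix A A ℂ) ⊗ₖ (M * Mᴴ)) * Gᴴ := by
    simp only [ρ, hψ, Prod.mk.eta]
    rw [sum_of_sum_mul_star_eq_mul_conjTranspose, conjTranspose_mul, conjTranspose_kronecker,
      conjTranspose_one, Matrix.mul_assoc, ← Matrix.mul_assoc (1 ⊗ₖ M), ← mul_kronecker_mul,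
      Matrix.one_mul, Matrix.mul_assoc]
  have hM : ∑ b, ∑ c, ‖M b c‖ ^ 2 ≤ 1 := by
    rw [← hφ, ← sum_norm_sq_mulVec_of_mem_unitaryGroup hH, Fintype.sum_prod_type]
    rfl
  rw [hρ]
  exact (posSemidef_one_sub_mul_conjTranspose hM).one_sub_one_kronecker
    |>.one_sub_mul_mul_conjTranspose_of_mem_unitaryGroup hG

/-- **Reduced outputs of a separable circuit sum to at most the identity.**
Let `G` be a unitary on `ℂ^{A×B}`, `H` a unitary on `ℂ^{B×C}`, `φ` a unit vector
in `ℂ^{B×C}`, `U = (G ⊗ I_C)(I_A ⊗ H)`, and for each `x ∈ A` let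
`ψ_x = U(e_x ⊗ φ)` and `ρ^x = Tr_C |ψ_x⟩⟨ψ_x|`.  Then `Σ_x ρ^x ⪯ I`. -/
theorem stmt5 {A B C : Type*} [Fintype A] [Fintype B] [Fintype C]
    [DecidableEq A] [DecidableEq B] [DecidableEq C]
    [Nonempty A] [Nonempty B] [Nonempty C]
    (G : Matrix (A × B) (A × B) ℂ) (hG : G ∈ Matrix.unitaryGroup (A × B) ℂ)
    (H : Matrix (B × C) (B × C) ℂ) (hH : H ∈ Matrix.unitaryGroup (B × C) ℂ)
    (φ : B × C → ℂ) (hφ : ∑ bc, ‖φ bc‖ ^ 2 = 1) :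
    let U : Matrix (A × B × C) (A × B × C) ℂ :=
      (Matrix.of fun p q =>
          G (p.1, p.2.1) (q.1, q.2.1) * (if p.2.2 = q.2.2 then 1 else 0)) *
      (Matrix.of fun p q => (if p.1 = q.1 then 1 else 0) * H p.2 q.2)
    let ψ : A → (A × B × C → ℂ) := fun x =>
      U.mulVec fun p => if p.1 = x then φ p.2 else 0
    let ρ : A → Matrix (A × B) (A × B) ℂ := fun x =>
      Matrix.of fun r s => ∑ c, ψ x (r.1, r.2, c) * star (ψ x (s.1, s.2, c))
    ((1 : Matrix (A × B) (A × B) ℂ) - ∑ x, ρ x).PosSemidef :=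
  stmt5_general G hG H hH φ hφ
end

section
/- Let s ≥ 3 be an integer. Let {S_i}_{i∈I} be a finite family, indexed by a finite set I, of pairwise disjoint nonempty integer intervals, and let {T_j}_{j∈J} be a finite family of pairwise disjoint integer intervals such that each T_j intersects at most s of the intervals S_i. For each i ∈ I define S'_i = S_i ∪ ⋃{T_j : T_j ∩ S_i ≠ ∅}. Then there exists a subset I' ⊆ I with |I'| ≥ |I|/s such that the sets S'_i for i ∈ I' are pairwise disjoint. -/
/-!
Choose a point `f i ∈ S i` and number the `S i` from left to right by `rankBy f`. An interval
`T j` meeting `S i` and `S i'` contains every `S k` lying strictly between them, so the `S k`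
met by `T j` have consecutive ranks and, as there are at most `s` of them, their ranks differ
by less than `s`. Hence no `T j` meets two of the `S i` whose ranks are multiples of `s`, and
these are at least `|I| / s` many.
-/

open Finset Function

section Grow

variable {α I J : Type*}

def grow (S : I → Set α) (T : J → Set α) (i : I) : Set α :=
  S i ∪ ⋃ j ∈ {j | (T j ∩ S i).Nonempty}, T j

lemma disjoint_grow {S : I → Set α} {T : J → Set α}
    (hTdisj : Pairwise fun j j' => Disjoint (T j) (T j')) {i i' : I} (hS : Disjoint (S i) (S i'))
    (h : ∀ j, (T j ∩ S i).Nonempty → ¬(T j ∩ S i').Nonempty) :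
    Disjoint (grow S T i) (grow S T i') := by
  simp only [grow, Set.disjoint_union_left, Set.disjoint_union_right, Set.disjoint_iUnion₂_left,
    Set.disjoint_iUnion₂_right, Set.mem_ofPred_eq]
  refine ⟨⟨hS, fun j hj => ?_⟩, fun j' hj' => ⟨?_, fun j hj => ?_⟩⟩
  · exact Set.disjoint_left.2 fun x hxT hxS => h j hj ⟨x, hxT, hxS⟩
  · exact Set.disjoint_left.2 fun x hxS hxT => h j' ⟨x, hxT, hxS⟩ hj'
  · rcases eq_or_ne j j' with rfl | hne
    exacts [absurd hj' (h j hj), hTdisj hne]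

end Grow

section Rank

variable {α I : Type*} [LinearOrder α] [Fintype I] (f : I → α)

def rankBy (i : I) : ℕ := #{k | f k < f i}

lemma rankBy_lt_card (i : I) : rankBy f i < Fintype.card I :=
  card_lt_univ_of_notMem (x := i) (by simp)

lemma rankBy_add_card_filter {i i' : I} (h : f i ≤ f i') :
    rankBy f i + #{k | f i ≤ f k ∧ f k < f i'} = rankBy f i' := by
  classical
  rw [rankBy, rankBy, ← card_union_of_disjoint
    (disjoint_filter.2 fun k _ hk hk' => (not_lt.2 hk'.1) hk), ← filter_or]
  congr 1
  ext k
  simp only [mem_filter, mem_univ, true_and]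
  constructor
  · rintro (hk | hk)
    exacts [hk.trans_le h, hk.2]
  · intro hk
    exact (lt_or_ge (f k) (f i)).imp id fun hik => ⟨hik, hk⟩

lemma rankBy_lt_rankBy {i i' : I} (h : f i < f i') : rankBy f i < rankBy f i' := by
  rw [← rankBy_add_card_filter f h.le]
  exact Nat.lt_add_of_pos_right (card_pos.2 ⟨i, by simp [h]⟩)

lemma rankBy_injective (hf : Injective f) : Injective (rankBy f) := by
  intro i i' h
  by_contra hne
  rcases (hf.ne hne).lt_or_gt with hlt | hlt
  · exact (rankBy_lt_rankBy f hlt).ne h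
  · exact (rankBy_lt_rankBy f hlt).ne' h

lemma image_rankBy (hf : Injective f) : univ.image (rankBy f) = range (Fintype.card I) :=
  eq_of_subset_of_card_le (by simp [subset_iff, rankBy_lt_card])
    (by rw [card_image_of_injective _ (rankBy_injective f hf), card_range, card_univ])

lemma div_le_card_filter_range_dvd (n s : ℕ) : (n : ℝ) / s ≤ #{m ∈ range n | s ∣ m} := by
  rcases s.eq_zero_or_pos with rfl | hs
  · simp
  have hceil := Nat.count_modEq_card_eq_ceil n hs 0
  simp only [Nat.modEq_zero_iff_dvd, Nat.count_eq_card_filter_range, Nat.zero_mod,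
    Nat.cast_zero, sub_zero] at hceil
  have : (n : ℚ) / s ≤ #{m ∈ range n | s ∣ m} := by
    exact_mod_cast hceil ▸ Int.le_ceil ((n : ℚ) / s)
  simpa using (Rat.cast_le (K := ℝ)).2 this

lemma div_le_card_filter_dvd_rankBy (hf : Injective f) (s : ℕ) :
    (Fintype.card I : ℝ) / s ≤ #{i | s ∣ rankBy f i} := by
  rw [← card_image_of_injective _ (rankBy_injective f hf), ← filter_image, image_rankBy f hf]
  exact div_le_card_filter_range_dvd _ s

end Rank

section Intervals

variable {α I : Type*} [LinearOrder α]

lemma mem_of_between_of_inter_nonempty {A B T : Set α} (hA : A.OrdConnected)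
    (hB : B.OrdConnected) (hT : T.OrdConnected) {x y z : α} (hx : x ∈ A) (hy : y ∈ B)
    (hTA : (T ∩ A).Nonempty) (hTB : (T ∩ B).Nonempty) (hxz : x < z) (hzy : z < y)
    (hzA : z ∉ A) (hzB : z ∉ B) : z ∈ T := by
  obtain ⟨a, haT, haA⟩ := hTA
  obtain ⟨b, hbT, hbB⟩ := hTB
  by_cases hza : z < a
  · exact absurd (hA.out hx haA ⟨hxz.le, hza.le⟩) hzA
  by_cases hbz : b < z
  · exact absurd (hB.out hbB hy ⟨hbz.le, hzy.le⟩) hzB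
  exact hT.out haT hbT ⟨not_lt.1 hza, not_lt.1 hbz⟩

lemma rankBy_lt_rankBy_add [Fintype I] {S : I → Set α} (hS : ∀ i, (S i).OrdConnected)
    (hSdisj : Pairwise fun i i' => Disjoint (S i) (S i')) {f : I → α} (hf : ∀ i, f i ∈ S i)
    {T : Set α} (hT : T.OrdConnected) {s : ℕ} (hTs : {k | (T ∩ S k).Nonempty}.ncard ≤ s)
    {i i' : I} (hlt : f i < f i') (hi : (T ∩ S i).Nonempty) (hi' : (T ∩ S i').Nonempty) :
    rankBy f i' < rankBy f i + s := by
  classical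
  have hnotMem : ∀ {k l : I}, k ≠ l → f k ∉ S l := fun hne =>
    Set.disjoint_left.1 (hSdisj hne) (hf _)
  have hrank := rankBy_add_card_filter f hlt.le
  set between : Finset I := {k | f i ≤ f k ∧ f k < f i'}
  have hsub : insert i' between ⊆ {k | (T ∩ S k).Nonempty}.toFinset := by
    intro k hk
    rw [Set.mem_toFinset]
    rcases mem_insert.1 hk with rfl | hk
    · exact hi'
    obtain ⟨hik, hkr⟩ : f i ≤ f k ∧ f k < f i' := by simpa [between] using hk
    by_cases hki : k = i
    · exact hki ▸ hi
    have hki' : k ≠ i' := by rintro rfl; exact hkr.false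
    exact ⟨f k, mem_of_between_of_inter_nonempty (hS i) (hS i') hT (hf i) (hf i') hi hi'
      (hik.lt_of_ne fun h => hnotMem hki (h ▸ hf i)) hkr (hnotMem hki) (hnotMem hki'), hf k⟩
  have hcard := card_le_card hsub
  rw [card_insert_of_notMem (by simp [between]), ← Set.ncard_eq_toFinset_card'] at hcard
  omega

end Intervals

theorem stmt6_general {I J : Type*} [Fintype I]
    (s : ℕ)
    (S : I → Set ℤ) (hSint : ∀ i, ∃ a b : ℤ, S i = Set.Icc a b)
    (hSne : ∀ i, (S i).Nonempty)
    (hSdisj : Pairwise fun i i' => Disjoint (S i) (S i'))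
    (T : J → Set ℤ) (hTint : ∀ j, ∃ a b : ℤ, T j = Set.Icc a b)
    (hTdisj : Pairwise fun j j' => Disjoint (T j) (T j'))
    (hTs : ∀ j, {i | (T j ∩ S i).Nonempty}.ncard ≤ s) :
    ∃ I' : Set I, (Fintype.card I : ℝ) / (s : ℝ) ≤ (I'.ncard : ℝ) ∧
      I'.Pairwise fun i i' =>
        Disjoint (S i ∪ ⋃ j ∈ {j | (T j ∩ S i).Nonempty}, T j)
          (S i' ∪ ⋃ j ∈ {j | (T j ∩ S i').Nonempty}, T j) := by
  choose f hf using hSne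
  have hSconn i : (S i).OrdConnected := by
    obtain ⟨a, b, h⟩ := hSint i
    exact h ▸ Set.ordConnected_Icc
  have hTconn j : (T j).OrdConnected := by
    obtain ⟨a, b, h⟩ := hTint j
    exact h ▸ Set.ordConnected_Icc
  have hfinj : Injective f := fun i i' h => hSdisj.eq (Set.not_disjoint_iff.2 ⟨_, hf i, h ▸ hf i'⟩)
  refine ⟨{i | s ∣ rankBy f i}, ?_, ?_⟩
  · rw [Set.ncard_eq_toFinset_card', Set.toFinset_ofPred]
    exact div_le_card_filter_dvd_rankBy f hfinj s
  · intro i hi i' hi' hne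
    wlog hlt : f i < f i' generalizing i i'
    · exact (this hi' hi hne.symm ((hfinj.ne hne).symm.lt_of_le (not_lt.1 hlt))).symm
    refine disjoint_grow hTdisj (hSdisj hne) fun j hj hj' => ?_
    have hclose := rankBy_lt_rankBy_add hSconn hSdisj hf (hTconn j) (hTs j) hlt hj hj'
    have hmono := rankBy_lt_rankBy f hlt
    have hgap := Nat.le_of_dvd (Nat.sub_pos_of_lt hmono) (Nat.dvd_sub hi' hi)
    omega

/-- **1D structure lemma (combinatorial form).**
Given pairwise disjoint nonempty integer intervals `S i` (`i ∈ I`) and pairwise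
disjoint integer intervals `T j` (`j ∈ J`) such that each `T j` intersects at
most `s ≥ 3` of the `S i`, letting
`S' i = S i ∪ ⋃ {T j : T j ∩ S i ≠ ∅}`, there is a subset `I' ⊆ I` with
`|I'| ≥ |I|/s` such that the `S' i`, `i ∈ I'`, are pairwise disjoint. -/
theorem stmt6 {I J : Type*} [Fintype I] [Fintype J]
    (s : ℕ) (hs : 3 ≤ s)
    (S : I → Set ℤ) (hSint : ∀ i, ∃ a b : ℤ, S i = Set.Icc a b)
    (hSne : ∀ i, (S i).Nonempty)
    (hSdisj : Pairwise fun i i' => Disjoint (S i) (S i'))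
    (T : J → Set ℤ) (hTint : ∀ j, ∃ a b : ℤ, T j = Set.Icc a b)
    (hTdisj : Pairwise fun j j' => Disjoint (T j) (T j'))
    (hTs : ∀ j, {i | (T j ∩ S i).Nonempty}.ncard ≤ s) :
    ∃ I' : Set I, (Fintype.card I : ℝ) / (s : ℝ) ≤ (I'.ncard : ℝ) ∧
      I'.Pairwise fun i i' =>
        Disjoint (S i ∪ ⋃ j ∈ {j | (T j ∩ S i).Nonempty}, T j)
          (S i' ∪ ⋃ j ∈ {j | (T j ∩ S i').Nonempty}, T j) :=
  stmt6_general s S hSint hSne hSdisj T hTint hTdisj hTs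
end

section
/- Let k ≥ 1 and let x_1 < x_2 < ⋯ < x_k be integers. For each i ∈ {1,…,k}, let S_i and T_i be integer intervals with x_i ∈ S_i and x_i ∈ T_i, and suppose that for all i, j ∈ {1,…,k}: x_j ∈ T_i if and only if x_i ∈ S_j. Suppose the intervals S_1, …, S_k are pairwise disjoint. Then the intervals T_i with i odd are pairwise disjoint. -/
/-! If `T i` and `T j` met while some `x m` lay strictly between `x i` and `x j`, then `x m`
would lie in the interval `T i` or in `T j`; by duality `x i` or `x j` would lie in `S m`,
contradicting the disjointness of the `S`'s. Between two distinct qubits of even index there is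
always such an `m`. -/

theorem Set.OrdConnected.mem_union_of_mem_inter {α : Type*} [LinearOrder α] {s t : Set α}
    (hs : s.OrdConnected) (ht : t.OrdConnected) {a b y z : α} (ha : a ∈ s) (hb : b ∈ t)
    (hay : a ≤ y) (hyb : y ≤ b) (hz : z ∈ s ∩ t) : y ∈ s ∪ t := by
  rcases le_total y z with hyz | hzy
  · exact Or.inl (hs.out ha hz.1 ⟨hay, hyz⟩)
  · exact Or.inr (ht.out hz.2 hb ⟨hzy, hyb⟩)

open Function in
theorem disjoint_of_le_of_le_of_dual {ι α : Type*} [LinearOrder α] {x : ι → α}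
    {S T : ι → Set α} (hT : ∀ i, (T i).OrdConnected) (hxS : ∀ i, x i ∈ S i)
    (hdual : ∀ i j, x j ∈ T i ↔ x i ∈ S j) (hSdisj : Pairwise (Disjoint on S))
    {i j m : ι} (hmi : m ≠ i) (hmj : m ≠ j) (hxim : x i ≤ x m) (hxmj : x m ≤ x j) :
    Disjoint (T i) (T j) := by
  have hxT : ∀ i, x i ∈ T i := fun i => (hdual i i).mpr (hxS i)
  rw [Set.disjoint_iff]
  intro z hz
  rcases (hT i).mem_union_of_mem_inter (hT j) (hxT i) (hxT j) hxim hxmj hz with hm | hm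
  · exact Set.disjoint_left.mp (hSdisj hmi.symm) (hxS i) ((hdual i m).mp hm)
  · exact Set.disjoint_left.mp (hSdisj hmj.symm) (hxS j) ((hdual j m).mp hm)

theorem stmt7_general (k : ℕ) (x : Fin k → ℤ) (hx : StrictMono x)
    (S T : Fin k → Set ℤ)
    (hT : ∀ i, ∃ a b : ℤ, T i = Set.Icc a b)
    (hxS : ∀ i, x i ∈ S i)
    (hdual : ∀ i j, x j ∈ T i ↔ x i ∈ S j)
    (hSdisj : Pairwise fun i j => Disjoint (S i) (S j)) :
    ∀ i j : Fin k, i ≠ j → i.val % 2 = 0 → j.val % 2 = 0 →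
      Disjoint (T i) (T j) := by
  have hTconn : ∀ i, (T i).OrdConnected := fun i => by
    obtain ⟨a, b, h⟩ := hT i
    exact h ▸ Set.ordConnected_Icc
  intro i j hij hi hj
  wlog hlt : i < j generalizing i j
  · exact (this j i hij.symm hj hi (hij.lt_or_gt.resolve_left hlt)).symm
  have hgap : i.val + 1 < j.val := by rw [Fin.lt_def] at hlt; omega
  let m : Fin k := ⟨i.val + 1, hgap.trans j.isLt⟩
  have him : i < m := Fin.lt_def.mpr (Nat.lt_succ_self _)
  have hmj : m < j := hgap
  exact disjoint_of_le_of_le_of_dual hTconn hxS hdual hSdisj him.ne' hmj.ne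
    (hx him).le (hx hmj).le

/-- **Alternate qubits have disjoint backward light-cones.**
Let `x 0 < x 1 < ⋯ < x (k−1)` be integers, and for each `i` let `S i` and `T i`
be integer intervals containing `x i` (the forward and backward light-cones),
with the duality `x j ∈ T i ↔ x i ∈ S j`.  If the `S i` are pairwise disjoint,
then the `T i` for `i` in odd (1-based) positions, i.e. `i % 2 = 0` in 0-based
indexing, are pairwise disjoint. -/
theorem stmt7 (k : ℕ) (hk : 1 ≤ k) (x : Fin k → ℤ) (hx : StrictMono x)
    (S T : Fin k → Set ℤ)
    (hS : ∀ i, ∃ a b : ℤ, S i = Set.Icc a b)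
    (hT : ∀ i, ∃ a b : ℤ, T i = Set.Icc a b)
    (hxS : ∀ i, x i ∈ S i) (hxT : ∀ i, x i ∈ T i)
    (hdual : ∀ i j, x j ∈ T i ↔ x i ∈ S j)
    (hSdisj : Pairwise fun i j => Disjoint (S i) (S j)) :
    ∀ i j : Fin k, i ≠ j → i.val % 2 = 0 → j.val % 2 = 0 →
      Disjoint (T i) (T j) :=
  stmt7_general k x hx S T hT hxS hdual hSdisj
end

section
/- Let Π be an N×N complex matrix satisfying Π = Π† = Π² (an orthogonal projection), let Λ = I − 2Π, and let ρ be an N×N Hermitian complex matrix. Then ‖ΛρΛ − ρ‖₁ ≤ 4‖Πρ‖₁, where ‖·‖₁ denotes the trace norm (the sum of the singular values). -/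
/-!
Write `Λ = 1 - 2P`, a self-adjoint unitary. Expanding, `ΛρΛ - ρ = -2 (Pρ Λ + (Pρ)ᴴ)`.
The difference is Hermitian, so its absolute value is `V (ΛρΛ - ρ)` for the unitary
`V = sign (ΛρΛ - ρ)`, and its trace norm is `Re Tr (V (ΛρΛ - ρ))`. Each of the two resulting
traces has the form `Tr (U (Pρ))` or `Tr (U (Pρ)ᴴ)` with `U` unitary, and `|Tr (U C)| ≤ ‖C‖₁`:
in an orthonormal eigenbasis `bᵢ` of `CᴴC` one has `|⟪bᵢ, U C bᵢ⟫| ≤ ‖C bᵢ‖ = √λᵢ`.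
-/

open Matrix
open scoped ComplexOrder

/-- The positive semidefinite square root of a positive semidefinite matrix
(the definition of `Matrix.PosSemidef.sqrt` in the older Mathlib, since removed). -/
noncomputable def posSemidefSqrtOld {n 𝕜 : Type*} [Fintype n] [RCLike 𝕜] [DecidableEq n]
    {A : Matrix n n 𝕜} (hA : A.PosSemidef) : Matrix n n 𝕜 :=
  (hA.1.eigenvectorUnitary : Matrix n n 𝕜) * diagonal ((↑) ∘ (√·) ∘ hA.1.eigenvalues) *
    (star hA.1.eigenvectorUnitary : Matrix n n 𝕜)

/-- The trace norm `‖M‖₁ = Tr √(Mᴴ M)` of a complex square matrix,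
i.e. the sum of its singular values. -/
noncomputable def traceNorm {N : ℕ} (M : Matrix (Fin N) (Fin N) ℂ) : ℝ :=
  (posSemidefSqrtOld (Matrix.posSemidef_conjTranspose_mul_self M)).trace.re

open scoped MatrixOrder

lemma LinearMap.norm_trace_le_sum_norm_apply {𝕜 E ι : Type*} [RCLike 𝕜] [Fintype ι]
    [NormedAddCommGroup E] [InnerProductSpace 𝕜 E] (T : E →ₗ[𝕜] E)
    (b : OrthonormalBasis ι 𝕜 E) :
    ‖T.trace 𝕜 E‖ ≤ ∑ i, ‖T (b i)‖ := by
  rw [T.trace_eq_sum_inner b]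
  refine (norm_sum_le _ _).trans (Finset.sum_le_sum fun i _ => ?_)
  simpa [b.orthonormal.1 i] using norm_inner_le_norm (𝕜 := 𝕜) (b i) (T (b i))

namespace Matrix

variable {n 𝕜 : Type*} [Fintype n] [DecidableEq n] [RCLike 𝕜]

lemma trace_eq_trace_toEuclideanLin (M : Matrix n n 𝕜) :
    M.trace = LinearMap.trace 𝕜 _ (toEuclideanLin M) := by
  rw [toEuclideanLin_eq_toLin_orthonormal, trace_toLin_eq]

lemma norm_toEuclideanCLM_apply_of_mem_unitary {U : Matrix n n 𝕜}
    (hU : U ∈ unitary (Matrix n n 𝕜)) (x : EuclideanSpace 𝕜 n) :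
    ‖toEuclideanCLM (𝕜 := 𝕜) U x‖ = ‖x‖ :=
  ContinuousLinearMap.norm_map_of_mem_unitary (Unitary.map_mem _ hU) x

lemma norm_toEuclideanCLM_apply_eigenvectorBasis (C : Matrix n n 𝕜) (i : n) :
    ‖toEuclideanCLM (𝕜 := 𝕜) C ((isHermitian_conjTranspose_mul_self C).eigenvectorBasis i)‖ =
      √((isHermitian_conjTranspose_mul_self C).eigenvalues i) := by
  set hA := isHermitian_conjTranspose_mul_self C
  have heig : toEuclideanCLM (𝕜 := 𝕜) (Cᴴ * C) (hA.eigenvectorBasis i) =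
      (hA.eigenvalues i : 𝕜) • hA.eigenvectorBasis i := by
    apply WithLp.ofLp_injective
    rw [ofLp_toEuclideanCLM, WithLp.ofLp_smul, hA.mulVec_eigenvectorBasis i,
      RCLike.real_smul_eq_coe_smul (K := 𝕜)]
  rw [ContinuousLinearMap.apply_norm_eq_sqrt_inner_adjoint_right,
    ← ContinuousLinearMap.star_eq_adjoint, ← map_star, ← ContinuousLinearMap.mul_def, ← map_mul,
    star_eq_conjTranspose, heig, inner_smul_right, inner_self_eq_norm_sq_to_K,
    hA.eigenvectorBasis.orthonormal.1 i]
  simp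

lemma norm_trace_mul_le_sum_sqrt_eigenvalues {U : Matrix n n 𝕜}
    (hU : U ∈ unitary (Matrix n n 𝕜)) (C : Matrix n n 𝕜) :
    ‖(U * C).trace‖ ≤ ∑ i, √((isHermitian_conjTranspose_mul_self C).eigenvalues i) := by
  rw [trace_eq_trace_toEuclideanLin]
  refine (LinearMap.norm_trace_le_sum_norm_apply _
    (isHermitian_conjTranspose_mul_self C).eigenvectorBasis).trans_eq (Finset.sum_congr rfl
    fun i _ => ?_)
  rw [← coe_toEuclideanCLM_eq_toEuclideanLin, ContinuousLinearMap.coe_coe, map_mul,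
    ContinuousLinearMap.mul_def, ContinuousLinearMap.comp_apply,
    norm_toEuclideanCLM_apply_of_mem_unitary hU, norm_toEuclideanCLM_apply_eigenvectorBasis]

lemma re_trace_posSemidefSqrtOld {A : Matrix n n 𝕜} (hA : A.PosSemidef) :
    RCLike.re (posSemidefSqrtOld hA).trace = ∑ i, √(hA.1.eigenvalues i) := by
  rw [posSemidefSqrtOld, trace_mul_cycle, Unitary.coe_star_mul_self, one_mul, trace_diagonal,
    map_sum]
  simp

lemma posSemidefSqrtOld_eq_sqrt {A : Matrix n n 𝕜} (hA : A.PosSemidef) :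
    posSemidefSqrtOld hA = CFC.sqrt A := by
  rw [CFC.sqrt_eq_real_sqrt A hA.nonneg, cfcₙ_eq_cfc (hf0 := Real.sqrt_zero), hA.1.cfc_eq,
    IsHermitian.cfc, Unitary.conjStarAlgAut_apply]
  rfl

lemma posSemidefSqrtOld_conjTranspose_mul_self (C : Matrix n n 𝕜) :
    posSemidefSqrtOld (posSemidef_conjTranspose_mul_self C) = CFC.abs C :=
  posSemidefSqrtOld_eq_sqrt _

lemma IsHermitian.exists_mem_unitary_abs_eq_mul {M : Matrix n n 𝕜} (hM : M.IsHermitian) :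
    ∃ V ∈ unitary (Matrix n n 𝕜), CFC.abs M = V * M := by
  set s : ℝ → ℝ := fun x => if 0 ≤ x then 1 else -1
  -- `s` is discontinuous at `0`, but the spectrum is finite; `cfc_mul` below finds `hs`.
  have hs : ContinuousOn s (spectrum ℝ M) := M.finite_real_spectrum.continuousOn _
  have hss : s * s = 1 := by ext x; by_cases hx : 0 ≤ x <;> simp [s, hx]
  have hsid : (fun x => s x * x) = (‖·‖) := by
    ext x; by_cases hx : 0 ≤ x <;> simp [s, hx, abs_of_nonneg, abs_of_neg, not_le.mp]
  refine ⟨cfc s M, ?_, ?_⟩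
  · have hsq : cfc s M * cfc s M = 1 := by
      rw [← cfc_mul s s M, ← Pi.mul_def, hss, Pi.one_def, cfc_const_one ℝ M]
    rw [Unitary.mem_iff, (cfc_predicate s M).star_eq]
    exact ⟨hsq, hsq⟩
  · rw [CFC.abs_eq_cfc_norm M hM, ← hsid, cfc_mul s (fun x => x) M, cfc_id' ℝ M]

end Matrix

namespace IsStarProjection

variable {R K : Type*} [Ring R] [StarRing R] [Semiring K] [Module K R] {p : R}

lemma one_sub_two_smul_mem_unitary (hp : IsStarProjection p) :
    1 - (2 : K) • p ∈ unitary R := by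
  convert hp.one_sub.two_mul_sub_one_mem_unitary using 1
  rw [two_smul, two_mul]
  abel

lemma isSelfAdjoint_one_sub_two_smul (hp : IsStarProjection p) :
    IsSelfAdjoint (1 - (2 : K) • p) := by
  rw [two_smul]
  exact .sub (.one R) (hp.isSelfAdjoint.add hp.isSelfAdjoint)

end IsStarProjection

section TraceNorm

variable {N : ℕ}

lemma traceNorm_eq_re_trace_abs (M : Matrix (Fin N) (Fin N) ℂ) :
    traceNorm M = (CFC.abs M).trace.re := by
  rw [traceNorm, posSemidefSqrtOld_conjTranspose_mul_self]

lemma norm_trace_mul_le_traceNorm {U : Matrix (Fin N) (Fin N) ℂ}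
    (hU : U ∈ unitary (Matrix (Fin N) (Fin N) ℂ)) (C : Matrix (Fin N) (Fin N) ℂ) :
    ‖(U * C).trace‖ ≤ traceNorm C :=
  (norm_trace_mul_le_sum_sqrt_eigenvalues hU C).trans_eq (re_trace_posSemidefSqrtOld _).symm

lemma norm_trace_mul_conjTranspose_le_traceNorm {U : Matrix (Fin N) (Fin N) ℂ}
    (hU : U ∈ unitary (Matrix (Fin N) (Fin N) ℂ)) (C : Matrix (Fin N) (Fin N) ℂ) :
    ‖(U * Cᴴ).trace‖ ≤ traceNorm C := by
  rw [← norm_star, ← trace_conjTranspose, conjTranspose_mul, conjTranspose_conjTranspose,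
    trace_mul_comm]
  exact norm_trace_mul_le_traceNorm (Unitary.star_mem hU) C

end TraceNorm

/-- **Erasure inequality for a CZ-type reflection.**
If `P` is an orthogonal projection (`P = Pᴴ = P²`), `Λ = I - 2P`, and `ρ` is
Hermitian, then `‖ΛρΛ - ρ‖₁ ≤ 4‖Pρ‖₁`. -/
theorem stmt8 (N : ℕ) (P ρ : Matrix (Fin N) (Fin N) ℂ)
    (hPherm : Pᴴ = P) (hPidem : P * P = P) (hρ : ρ.IsHermitian) :
    traceNorm ((1 - (2 : ℂ) • P) * ρ * (1 - (2 : ℂ) • P) - ρ) ≤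
      4 * traceNorm (P * ρ) := by
  have hP : IsStarProjection P := ⟨hPidem, hPherm⟩
  set Λ : Matrix (Fin N) (Fin N) ℂ := 1 - (2 : ℂ) • P with hΛ
  have hΛu : Λ ∈ unitary (Matrix (Fin N) (Fin N) ℂ) := hP.one_sub_two_smul_mem_unitary
  have hΛsa : IsSelfAdjoint Λ := hP.isSelfAdjoint_one_sub_two_smul
  have hM : (Λ * ρ * Λ - ρ).IsHermitian := by
    simpa [hΛsa.star_eq] using ((hρ.isSelfAdjoint.conjugate Λ).sub hρ.isSelfAdjoint).isHermitian
  have hdecomp : Λ * ρ * Λ - ρ = (-2 : ℂ) • (P * ρ * Λ + (P * ρ)ᴴ) := by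
    rw [conjTranspose_mul, hPherm, hρ.eq, hΛ]
    simp only [sub_mul, mul_sub, one_mul, mul_one, smul_mul_assoc, mul_smul_comm, smul_smul,
      smul_sub, mul_assoc]
    module
  obtain ⟨V, hV, hVM⟩ := hM.exists_mem_unitary_abs_eq_mul
  calc traceNorm (Λ * ρ * Λ - ρ)
      = (-2 * ((Λ * V * (P * ρ)).trace + (V * (P * ρ)ᴴ).trace)).re := by
        rw [traceNorm_eq_re_trace_abs, hVM, hdecomp, mul_smul_comm, trace_smul, mul_add,
          trace_add, ← mul_assoc, trace_mul_cycle, smul_eq_mul]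
    _ ≤ 2 * (‖(Λ * V * (P * ρ)).trace‖ + ‖(V * (P * ρ)ᴴ).trace‖) := by
        refine (Complex.re_le_norm _).trans ?_
        rw [norm_mul, show ‖(-2 : ℂ)‖ = 2 by norm_num]
        gcongr
        exact norm_add_le _ _
    _ ≤ 2 * (traceNorm (P * ρ) + traceNorm (P * ρ)) := by
        gcongr
        · exact norm_trace_mul_le_traceNorm (mul_mem hΛu hV) _
        · exact norm_trace_mul_conjTranspose_le_traceNorm hV _
    _ = 4 * traceNorm (P * ρ) := by ring
end

section
/- Let m ≥ 1 and k ≥ 0 be integers, let S ⊆ [m], let h : {−1,1}^m → {−1,1}, and let f, F : {−1,1}^m → [−1,1]. Then |E_x[F(x)·h(x)]| ≤ E_{z}[ √(W^{≤k}[h|_{S,z}]) + √(W^{>k}[f|_{S,z}]) ] + ‖f − F‖₂, where x is uniform on {−1,1}^m and z is uniform on {−1,1}^S. -/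
/-!
Split `E[F h] = E[f h] - E[(f - F) h]`. Since `E[h²] ≤ 1`, Cauchy–Schwarz bounds the second
term by `‖f - F‖₂`. The first term is the average over `z` of `E[f|_{S,z} h|_{S,z}]`; on each
subcube, Plancherel writes this correlation as `Σ_T f̂(T) ĥ(T)`, and Cauchy–Schwarz on the levels
`≤ k` and `> k` separately bounds it by `√W^{≤k}[h] · ‖f‖₂ + √W^{>k}[f] · ‖h‖₂`, where both
norms are at most 1.
-/

/-- The `±1` value encoded by a Boolean: `true ↦ 1`, `false ↦ -1`. -/
def pmOfBool (b : Bool) : ℝ := if b then 1 else -1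

/-- The Fourier character `χ_T(x) = ∏_{i ∈ T} x_i` on the Boolean cube
(points of `{−1,1}^ι` encoded as `ι → Bool`). -/
def chi {ι : Type*} (T : Finset ι) (x : ι → Bool) : ℝ := ∏ i ∈ T, pmOfBool (x i)

/-- The Fourier coefficient `f̂(T) = E_x[f(x)·χ_T(x)]`. -/
noncomputable def fCoeff {ι : Type*} [Fintype ι] [DecidableEq ι]
    (f : (ι → Bool) → ℝ) (T : Finset ι) : ℝ :=
  (∑ x, f x * chi T x) / (Fintype.card (ι → Bool) : ℝ)

/-- The Fourier weight of `f` at levels `≤ k`: `W^{≤k}[f] = Σ_{|T| ≤ k} f̂(T)²`. -/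
noncomputable def weightLE {ι : Type*} [Fintype ι] [DecidableEq ι]
    (k : ℕ) (f : (ι → Bool) → ℝ) : ℝ :=
  ∑ T ∈ Finset.univ.filter (fun T : Finset ι => T.card ≤ k), (fCoeff f T) ^ 2

/-- The Fourier weight of `f` at levels `> k`: `W^{>k}[f] = Σ_{|T| > k} f̂(T)²`. -/
noncomputable def weightGT {ι : Type*} [Fintype ι] [DecidableEq ι]
    (k : ℕ) (f : (ι → Bool) → ℝ) : ℝ :=
  ∑ T ∈ Finset.univ.filter (fun T : Finset ι => k < T.card), (fCoeff f T) ^ 2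

/-- The (normalized) 2-norm `‖f‖₂ = (E_x[f(x)²])^{1/2}`. -/
noncomputable def l2norm {ι : Type*} [Fintype ι] [DecidableEq ι]
    (f : (ι → Bool) → ℝ) : ℝ :=
  Real.sqrt ((∑ x, (f x) ^ 2) / (Fintype.card (ι → Bool) : ℝ))

/-- The restriction `f|_{S,z}` of `f` obtained by fixing the coordinates in `S`
to the assignment `z`, viewed as a function of the remaining coordinates. -/
def restrictTo {ι : Type*} [Fintype ι] [DecidableEq ι] (f : (ι → Bool) → ℝ)
    (S : Finset ι) (z : {i // i ∈ S} → Bool) : ({i // i ∉ S} → Bool) → ℝ :=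
  fun y => f fun i => if h : i ∈ S then z ⟨i, h⟩ else y ⟨i, h⟩

open Finset
open scoped BigOperators

theorem abs_sum_mul_le_sqrt_mul_sqrt {α : Type*} (s : Finset α) (f g : α → ℝ) :
    |∑ i ∈ s, f i * g i| ≤ √(∑ i ∈ s, f i ^ 2) * √(∑ i ∈ s, g i ^ 2) := by
  rw [← Real.sqrt_sq_eq_abs, ← Real.sqrt_mul (by positivity)]
  exact Real.sqrt_le_sqrt (sum_mul_sq_le_sq_mul_sq s f g)

theorem pmOfBool_mul_pmOfBool_add_one (a b : Bool) :
    pmOfBool a * pmOfBool b + 1 = if a = b then 2 else 0 := by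
  cases a <;> cases b <;> norm_num [pmOfBool]

section Fourier

variable {ι : Type*} [Fintype ι] [DecidableEq ι]

theorem sum_chi_mul_chi (x y : ι → Bool) :
    ∑ T : Finset ι, chi T x * chi T y = if x = y then (Fintype.card (ι → Bool) : ℝ) else 0 := by
  have hprod : ∑ T : Finset ι, chi T x * chi T y =
      ∏ i, (pmOfBool (x i) * pmOfBool (y i) + 1) := by
    simp only [chi, ← prod_mul_distrib, prod_add_one, powerset_univ]
  rw [hprod]
  simp only [pmOfBool_mul_pmOfBool_add_one]
  split_ifs with hxy
  · simp [hxy]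
  · obtain ⟨i, hi⟩ := Function.ne_iff.mp hxy
    exact prod_eq_zero (mem_univ i) (if_neg hi)

theorem l2norm_eq_sqrt_expect (f : (ι → Bool) → ℝ) : l2norm f = √(𝔼 x, f x ^ 2) := by
  rw [l2norm, Fintype.expect_eq_sum_div_card]

theorem sum_fCoeff_mul_fCoeff (f g : (ι → Bool) → ℝ) :
    ∑ T : Finset ι, fCoeff f T * fCoeff g T = 𝔼 x, f x * g x := by
  set N : ℝ := (Fintype.card (ι → Bool) : ℝ)
  have hN : N ≠ 0 := by positivity
  have hexpand : ∀ T : Finset ι, fCoeff f T * fCoeff g T =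
      (∑ x, ∑ y, f x * g y * (chi T x * chi T y)) / (N * N) := fun T => by
    rw [fCoeff, fCoeff, div_mul_div_comm, sum_mul_sum]
    congr 1
    exact sum_congr rfl fun x _ => sum_congr rfl fun y _ => by ring
  calc ∑ T : Finset ι, fCoeff f T * fCoeff g T
      = (∑ x, ∑ y, f x * g y * ∑ T : Finset ι, chi T x * chi T y) / (N * N) := by
        simp only [hexpand, ← sum_div, mul_sum]
        rw [sum_comm]
        exact congrArg (· / (N * N)) (sum_congr rfl fun x _ => sum_comm)
    _ = (∑ x, f x * g x) * N / (N * N) := by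
        simp only [sum_chi_mul_chi, mul_ite, mul_zero, sum_ite_eq, mem_univ, if_true, sum_mul]
        rfl
    _ = 𝔼 x, f x * g x := by
        rw [mul_div_mul_right _ _ hN, Fintype.expect_eq_sum_div_card]

theorem sum_fCoeff_sq (f : (ι → Bool) → ℝ) :
    ∑ T : Finset ι, fCoeff f T ^ 2 = 𝔼 x, f x ^ 2 := by
  simpa only [sq] using sum_fCoeff_mul_fCoeff f f

theorem weightLE_add_weightGT (k : ℕ) (f : (ι → Bool) → ℝ) :
    weightLE k f + weightGT k f = 𝔼 x, f x ^ 2 := by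
  rw [weightLE, weightGT, ← sum_fCoeff_sq,
    ← sum_filter_add_sum_filter_not univ fun T : Finset ι => T.card ≤ k]
  simp only [not_le]

theorem weightLE_le (k : ℕ) (f : (ι → Bool) → ℝ) : weightLE k f ≤ 𝔼 x, f x ^ 2 := by
  rw [← weightLE_add_weightGT k f, le_add_iff_nonneg_right]
  exact sum_nonneg fun _ _ => sq_nonneg _

theorem weightGT_le (k : ℕ) (f : (ι → Bool) → ℝ) : weightGT k f ≤ 𝔼 x, f x ^ 2 := by
  rw [← weightLE_add_weightGT k f, le_add_iff_nonneg_left]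
  exact sum_nonneg fun _ _ => sq_nonneg _

theorem abs_expect_mul_le_sqrt_weightLE_add_sqrt_weightGT (k : ℕ) {g h : (ι → Bool) → ℝ}
    (hg : 𝔼 x, g x ^ 2 ≤ 1) (hh : 𝔼 x, h x ^ 2 ≤ 1) :
    |𝔼 x, g x * h x| ≤ √(weightLE k h) + √(weightGT k g) := by
  rw [← sum_fCoeff_mul_fCoeff,
    ← sum_filter_add_sum_filter_not univ fun T : Finset ι => T.card ≤ k]
  simp only [not_le]
  refine (abs_add_le _ _).trans (add_le_add ?_ ?_)
  · calc _ ≤ √(weightLE k g) * √(weightLE k h) := abs_sum_mul_le_sqrt_mul_sqrt _ _ _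
      _ ≤ 1 * √(weightLE k h) := by
        gcongr; exact Real.sqrt_le_one.mpr ((weightLE_le k g).trans hg)
      _ = _ := one_mul _
  · calc _ ≤ √(weightGT k g) * √(weightGT k h) := abs_sum_mul_le_sqrt_mul_sqrt _ _ _
      _ ≤ √(weightGT k g) * 1 := by
        gcongr; exact Real.sqrt_le_one.mpr ((weightGT_le k h).trans hh)
      _ = _ := mul_one _

theorem abs_expect_mul_le_l2norm (u : (ι → Bool) → ℝ) {v : (ι → Bool) → ℝ}
    (hv : 𝔼 x, v x ^ 2 ≤ 1) : |𝔼 x, u x * v x| ≤ l2norm u := by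
  rw [l2norm_eq_sqrt_expect, ← Real.sqrt_sq_eq_abs]
  refine Real.sqrt_le_sqrt ((expect_mul_sq_le_sq_mul_sq _ _ _).trans ?_)
  exact mul_le_of_le_one_right (expect_nonneg fun x _ => sq_nonneg _) hv

theorem expect_eq_expect_expect_restrictTo (G : (ι → Bool) → ℝ) (S : Finset ι) :
    𝔼 x, G x = 𝔼 z, 𝔼 y, restrictTo G S z y := by
  rw [← expect_product', univ_product_univ]
  refine Fintype.expect_equiv (Equiv.piEquivPiSubtypeProd (· ∈ S) fun _ => Bool) _ _ fun x => ?_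
  simp [restrictTo]

end Fourier

theorem expect_sq_le_one {α : Type*} [Fintype α] [Nonempty α] {g : α → ℝ}
    (hg : ∀ x, |g x| ≤ 1) : 𝔼 x, g x ^ 2 ≤ 1 :=
  expect_le univ_nonempty fun x _ => (sq_le_one_iff_abs_le_one _).2 (hg x)

theorem stmt13_general (m k : ℕ) (S : Finset (Fin m))
    (h : (Fin m → Bool) → ℝ) (hh : ∀ x, h x = 1 ∨ h x = -1)
    (f F : (Fin m → Bool) → ℝ) (hf : ∀ x, |f x| ≤ 1) :
    |(∑ x, F x * h x) / (Fintype.card (Fin m → Bool) : ℝ)| ≤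
      (∑ z : {i // i ∈ S} → Bool,
          (Real.sqrt (weightLE k (restrictTo h S z)) +
            Real.sqrt (weightGT k (restrictTo f S z)))) /
        (Fintype.card ({i // i ∈ S} → Bool) : ℝ) +
      l2norm (fun x => f x - F x) := by
  simp only [← Fintype.expect_eq_sum_div_card]
  have hh_abs : ∀ x, |h x| ≤ 1 := fun x => by rcases hh x with hx | hx <;> simp [hx]
  have hsplit : 𝔼 x, F x * h x = 𝔼 x, f x * h x - 𝔼 x, (f x - F x) * h x := by
    rw [← expect_sub_distrib]
    exact expect_congr rfl fun x _ => by ring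
  have hrestrict : |𝔼 x, f x * h x| ≤
      𝔼 z, (√(weightLE k (restrictTo h S z)) + √(weightGT k (restrictTo f S z))) := by
    rw [expect_eq_expect_expect_restrictTo _ S]
    refine (abs_expect_le _ _).trans (expect_le_expect fun z _ => ?_)
    exact abs_expect_mul_le_sqrt_weightLE_add_sqrt_weightGT k
      (expect_sq_le_one fun y => hf _) (expect_sq_le_one fun y => hh_abs _)
  rw [hsplit]
  exact (abs_sub _ _).trans
    (add_le_add hrestrict (abs_expect_mul_le_l2norm _ (expect_sq_le_one hh_abs)))

/-- **Correlation bound via restrictions.**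
For `h : {−1,1}^m → {−1,1}` and `f, F : {−1,1}^m → [−1,1]`,
`|E_x[F(x)h(x)]| ≤ E_z[√(W^{≤k}[h|_{S,z}]) + √(W^{>k}[f|_{S,z}])] + ‖f − F‖₂`,
where `z` ranges uniformly over assignments to the coordinates in `S`. -/
theorem stmt13 (m k : ℕ) (hm : 1 ≤ m) (S : Finset (Fin m))
    (h : (Fin m → Bool) → ℝ) (hh : ∀ x, h x = 1 ∨ h x = -1)
    (f F : (Fin m → Bool) → ℝ) (hf : ∀ x, |f x| ≤ 1) (hF : ∀ x, |F x| ≤ 1) :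
    |(∑ x, F x * h x) / (Fintype.card (Fin m → Bool) : ℝ)| ≤
      (∑ z : {i // i ∈ S} → Bool,
          (Real.sqrt (weightLE k (restrictTo h S z)) +
            Real.sqrt (weightGT k (restrictTo f S z)))) /
        (Fintype.card ({i // i ∈ S} → Bool) : ℝ) +
      l2norm (fun x => f x - F x) :=
  stmt13_general m k S h hh f F hf
end

section
/- Let m ≥ 1 be an integer and S ⊆ [m] with |S^c| ≥ 2. Let f : {−1,1}^m → ℝ be such that for every z ∈ {−1,1}^S, the restriction f|_{S,z} depends on at most one coordinate, i.e., there exist an index i ∈ S^c and a function g : {−1,1} → ℝ with f|_{S,z}(y) = g(y_i) for all y ∈ {−1,1}^{S^c}. Then E_x[f(x)·∏_{i=1}^m x_i] = 0, and consequently for every function F : {−1,1}^m → ℝ, |E_x[F(x)·∏_{i=1}^m x_i]| ≤ ‖F − f‖₂, where x is uniform on {−1,1}^m. -/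
/-!
Fix the coordinates in `S` to `z`. The restriction `f|_{S,z}` is `g(y_i)` for one free
coordinate `i`, and some other free coordinate `j` remains; flipping `y_j` negates the parity
of `y` but not `g(y_i)`, so `f|_{S,z}` is orthogonal to parity. Since parity factors as the
parity of `z` times the parity of `y`, the correlation of `f` with parity is zero. The bound
for `F` is then Cauchy–Schwarz for `F − f` against parity, which has unit norm.
-/

open Finset

lemma pmOfBool_not (b : Bool) : pmOfBool (!b) = -pmOfBool b := by
  cases b <;> simp [pmOfBool]

lemma chi_sq {ι : Type*} (T : Finset ι) (x : ι → Bool) : chi T x ^ 2 = 1 := by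
  rw [chi, ← prod_pow]
  exact prod_eq_one fun i _ => by cases x i <;> simp [pmOfBool]

lemma chi_update_not {ι : Type*} [DecidableEq ι] {T : Finset ι} {j : ι} (hj : j ∈ T)
    (x : ι → Bool) : chi T (Function.update x j (!x j)) = -chi T x := by
  simp only [chi, Function.apply_update (fun _ => pmOfBool), prod_update_of_mem hj,
    pmOfBool_not, ← mul_prod_erase T _ hj, sdiff_singleton_eq_erase, neg_mul]

lemma sum_mul_chi_eq_zero_of_update_not {ι : Type*} [Fintype ι] [DecidableEq ι]
    {T : Finset ι} {j : ι} (hj : j ∈ T) (h : (ι → Bool) → ℝ)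
    (hh : ∀ x, h (Function.update x j (!x j)) = h x) :
    ∑ x, h x * chi T x = 0 := by
  have hflip : Function.Involutive fun x : ι → Bool => Function.update x j (!x j) :=
    fun x => by simp
  have := Equiv.sum_comp (hflip.toPerm _) fun x => h x * chi T x
  simpa only [Function.Involutive.coe_toPerm, hh, chi_update_not hj, mul_neg,
    sum_neg_distrib, neg_eq_self] using this

lemma sum_comp_eval_mul_chi_univ_eq_zero {κ : Type*} [Fintype κ] [DecidableEq κ]
    (hκ : 2 ≤ Fintype.card κ) (i : κ) (g : Bool → ℝ) :
    ∑ y : κ → Bool, g (y i) * chi univ y = 0 := by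
  obtain ⟨j, hji⟩ := Fintype.exists_ne_of_one_lt_card hκ i
  exact sum_mul_chi_eq_zero_of_update_not (mem_univ j) _ fun y => by
    rw [Function.update_of_ne hji.symm]

lemma chi_univ_piEquivPiSubtypeProd_symm {ι : Type*} [Fintype ι] [DecidableEq ι]
    (S : Finset ι) (z : {i // i ∈ S} → Bool) (y : {i // i ∉ S} → Bool) :
    chi univ ((Equiv.piEquivPiSubtypeProd (· ∈ S) fun _ => Bool).symm (z, y)) =
      chi univ z * chi univ y := by
  rw [chi, ← Fintype.prod_subtype_mul_prod_subtype (· ∈ S)]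
  -- the two sides index by `{i // i ∈ S}` with different `Fintype` instances
  congr 1 <;> unfold chi <;> congr 1 <;> ext i <;> simp [i.2]

lemma sum_mul_chi_univ_eq_sum_restrictTo {ι : Type*} [Fintype ι] [DecidableEq ι]
    (f : (ι → Bool) → ℝ) (S : Finset ι) :
    ∑ x, f x * chi univ x = ∑ z, chi univ z * ∑ y, restrictTo f S z y * chi univ y := by
  rw [← (Equiv.piEquivPiSubtypeProd (· ∈ S) fun _ => Bool).symm.sum_comp,
    Fintype.sum_prod_type]
  refine sum_congr rfl fun z _ => ?_
  rw [mul_sum]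
  refine sum_congr rfl fun y _ => ?_
  have hglue : restrictTo f S z y =
      f ((Equiv.piEquivPiSubtypeProd (· ∈ S) fun _ => Bool).symm (z, y)) := rfl
  rw [hglue, chi_univ_piEquivPiSubtypeProd_symm]
  ring

lemma fCoeff_univ_eq_zero_of_restrictTo {ι : Type*} [Fintype ι] [DecidableEq ι]
    {S : Finset ι} (hS : 2 ≤ Sᶜ.card) {f : (ι → Bool) → ℝ}
    (hf : ∀ z : {i // i ∈ S} → Bool, ∃ (i : {i // i ∉ S}) (g : Bool → ℝ),
      ∀ y, restrictTo f S z y = g (y i)) :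
    fCoeff f univ = 0 := by
  have hcard : 2 ≤ Fintype.card {i // i ∉ S} := by
    simpa [Fintype.card_subtype, filter_not, compl_eq_univ_sdiff] using hS
  rw [fCoeff, sum_mul_chi_univ_eq_sum_restrictTo f S, div_eq_zero_iff]
  refine Or.inl (sum_eq_zero fun z _ => ?_)
  obtain ⟨i, g, hg⟩ := hf z
  simp only [hg, sum_comp_eval_mul_chi_univ_eq_zero hcard, mul_zero]

lemma fCoeff_sub {ι : Type*} [Fintype ι] [DecidableEq ι] (F f : (ι → Bool) → ℝ)
    (T : Finset ι) : fCoeff (F - f) T = fCoeff F T - fCoeff f T := by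
  simp only [fCoeff, Pi.sub_apply, sub_mul, sum_sub_distrib, sub_div]

lemma abs_fCoeff_le_l2norm {ι : Type*} [Fintype ι] [DecidableEq ι] (f : (ι → Bool) → ℝ)
    (T : Finset ι) : |fCoeff f T| ≤ l2norm f := by
  set N : ℝ := (Fintype.card (ι → Bool) : ℝ)
  have hN : 0 < N := by positivity
  have hCS : (∑ x, f x * chi T x) ^ 2 ≤ (∑ x, f x ^ 2) * N := by
    simpa [chi_sq, N] using sum_mul_sq_le_sq_mul_sq univ f (chi T)
  apply Real.abs_le_sqrt
  rwa [fCoeff, div_pow, sq N, ← div_div, div_le_div_iff_of_pos_right hN, div_le_iff₀ hN]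

theorem stmt14_general (m : ℕ) (S : Finset (Fin m)) (hS : 2 ≤ Sᶜ.card)
    (f : (Fin m → Bool) → ℝ)
    (hf : ∀ z : {i // i ∈ S} → Bool, ∃ (i : {i // i ∉ S}) (g : Bool → ℝ),
      ∀ y, restrictTo f S z y = g (y i)) :
    (∑ x, f x * ∏ i, pmOfBool (x i)) / (Fintype.card (Fin m → Bool) : ℝ) = 0 ∧
      ∀ F : (Fin m → Bool) → ℝ,
        |(∑ x, F x * ∏ i, pmOfBool (x i)) / (Fintype.card (Fin m → Bool) : ℝ)| ≤
          l2norm (fun x => F x - f x) := by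
  show fCoeff f univ = 0 ∧ ∀ F, |fCoeff F univ| ≤ l2norm (F - f)
  have hf₀ : fCoeff f univ = 0 := fCoeff_univ_eq_zero_of_restrictTo hS hf
  refine ⟨hf₀, fun F => ?_⟩
  simpa only [fCoeff_sub, hf₀, sub_zero] using abs_fCoeff_le_l2norm (F - f) univ

/-- **Functions that are locally almost constant have no correlation with parity.**
If every restriction of `f` fixing the coordinates in `S` depends on at most one
remaining coordinate (and at least two coordinates remain), then `f` is
uncorrelated with the full parity `∏ᵢ xᵢ`; consequently any `F` has correlation
with parity at most `‖F − f‖₂`. -/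
theorem stmt14 (m : ℕ) (hm : 1 ≤ m) (S : Finset (Fin m)) (hS : 2 ≤ Sᶜ.card)
    (f : (Fin m → Bool) → ℝ)
    (hf : ∀ z : {i // i ∈ S} → Bool, ∃ (i : {i // i ∉ S}) (g : Bool → ℝ),
      ∀ y, restrictTo f S z y = g (y i)) :
    (∑ x, f x * ∏ i, pmOfBool (x i)) / (Fintype.card (Fin m → Bool) : ℝ) = 0 ∧
      ∀ F : (Fin m → Bool) → ℝ,
        |(∑ x, F x * ∏ i, pmOfBool (x i)) / (Fintype.card (Fin m → Bool) : ℝ)| ≤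
          l2norm (fun x => F x - f x) :=
  stmt14_general m S hS f hf
end

section
/- Let N ≥ 1 and let W be an N×N complex unitary matrix. Then there exists an N×N diagonal matrix D all of whose diagonal entries have modulus 1 such that Σ_{x,y} |W_{xy} − D_{xy}|² ≤ 2·Σ_x √(1 − |W_{xx}|²). -/
/-- **Closeness to a diagonal phase matrix.**
For any unitary `W`, there is a diagonal matrix `D` of unimodular entries with
`Σ_{x,y} |W_{xy} − D_{xy}|² ≤ 2 Σ_x √(1 − |W_{xx}|²)`. -/
theorem stmt17 (N : ℕ) (hN : 1 ≤ N) (W : Matrix (Fin N) (Fin N) ℂ)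
    (hW : W ∈ Matrix.unitaryGroup (Fin N) ℂ) :
    ∃ D : Fin N → ℂ, (∀ x, ‖D x‖ = 1) ∧
      ∑ x : Fin N, ∑ y : Fin N, ‖W x y - Matrix.diagonal D x y‖ ^ 2 ≤
        2 * ∑ x : Fin N, Real.sqrt (1 - ‖W x x‖ ^ 2) := by
  classical
  set D : Fin N → ℂ := fun x => if W x x = 0 then 1 else (‖W x x‖ : ℂ)⁻¹ * W x x with hD
  have hDnorm : ∀ x, ‖D x‖ = 1 := by
    intro x
    by_cases h : W x x = 0
    · simp [hD, h]
    · have hn : ‖W x x‖ ≠ 0 := norm_ne_zero_iff.mpr h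
      simp only [hD, h, if_false, norm_mul, norm_inv, Complex.norm_real,
        Real.norm_eq_abs, abs_of_nonneg (norm_nonneg _)]
      exact inv_mul_cancel₀ hn
  refine ⟨D, hDnorm, ?_⟩
  have hrow : ∀ x : Fin N, ∑ y : Fin N, ‖W x y‖ ^ 2 = 1 := by
    intro x
    have h := (Matrix.mem_unitaryGroup_iff.mp hW)
    have h2 := congrFun (congrFun h x) x
    rw [Matrix.mul_apply, Matrix.one_apply_eq] at h2
    have : ∑ y : Fin N, (‖W x y‖ ^ 2 : ℂ) = 1 := by
      rw [← h2]
      refine Finset.sum_congr rfl fun y _ => ?_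
      have hs : star W y x = (starRingEnd ℂ) (W x y) := rfl
      rw [hs, Complex.mul_conj']
    exact_mod_cast this
  have key : ∀ x : Fin N, ∑ y : Fin N, ‖W x y - Matrix.diagonal D x y‖ ^ 2 ≤
      2 * Real.sqrt (1 - ‖W x x‖ ^ 2) := by
    intro x
    set t := ‖W x x‖ with ht
    have ht0 : 0 ≤ t := norm_nonneg _
    have ht1 : t ≤ 1 := by
      have h1 : t ^ 2 ≤ ∑ y : Fin N, ‖W x y‖ ^ 2 :=
        Finset.single_le_sum (f := fun y => ‖W x y‖ ^ 2)
          (fun y _ => sq_nonneg _) (Finset.mem_univ x)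
      rw [hrow x] at h1
      nlinarith
    have hdiag : ‖W x x - D x‖ = 1 - t := by
      by_cases h : W x x = 0
      · simp [hD, h, ht]
      · have hn : t ≠ 0 := by simpa [ht] using norm_ne_zero_iff.mpr h
        have hWx : W x x = (t : ℂ) * D x := by
          simp only [hD, h, if_false]
          rw [← mul_assoc]
          rw [mul_inv_cancel₀ (by exact_mod_cast hn), one_mul]
        rw [hWx, ← sub_one_mul, norm_mul, hDnorm x, mul_one]
        rw [show ((t : ℂ) - 1) = ((t - 1 : ℝ) : ℂ) by push_cast; ring]
        rw [Complex.norm_real, Real.norm_eq_abs, abs_of_nonpos (by linarith)]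
        ring
    have hsplit : ∑ y : Fin N, ‖W x y - Matrix.diagonal D x y‖ ^ 2
        = ‖W x x - D x‖ ^ 2 + ∑ y ∈ Finset.univ.erase x, ‖W x y‖ ^ 2 := by
      rw [← Finset.add_sum_erase _ _ (Finset.mem_univ x)]
      congr 1
      · rw [Matrix.diagonal_apply_eq]
      · refine Finset.sum_congr rfl fun y hy => ?_
        rw [Matrix.diagonal_apply_ne' _ (Finset.ne_of_mem_erase hy), sub_zero]
    have herase : ∑ y ∈ Finset.univ.erase x, ‖W x y‖ ^ 2 = 1 - t ^ 2 := by
      have h1 := hrow x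
      rw [← Finset.add_sum_erase Finset.univ (fun y => ‖W x y‖ ^ 2) (Finset.mem_univ x)] at h1
      have h1' : ‖W x x‖ ^ 2 + ∑ y ∈ Finset.univ.erase x, ‖W x y‖ ^ 2 = 1 := h1
      linarith
    rw [hsplit, hdiag, herase]
    have hle : (1 - t) ≤ Real.sqrt (1 - t ^ 2) := by
      have : (1 - t) = Real.sqrt ((1 - t) ^ 2) := (Real.sqrt_sq (by linarith)).symm
      rw [this]
      apply Real.sqrt_le_sqrt
      nlinarith
    nlinarith
  calc ∑ x : Fin N, ∑ y : Fin N, ‖W x y - Matrix.diagonal D x y‖ ^ 2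
      ≤ ∑ x : Fin N, 2 * Real.sqrt (1 - ‖W x x‖ ^ 2) :=
        Finset.sum_le_sum fun x _ => key x
    _ = 2 * ∑ x : Fin N, Real.sqrt (1 - ‖W x x‖ ^ 2) := by rw [Finset.mul_sum]
end
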